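/- arXiv:1909.08532 — 4 statements merged into one kernel-verified Lean document; each statement's English description precedes it below -/
import Mathlib

section
/- For all invertible real d×d matrices A and B and every real s ≥ 0, the singular value function satisfies φ^s(AB) ≤ φ^s(A)·φ^s(B), where φ^s(A) := σ₁(A)···σ_⌊s⌋(A)·σ_⌈s⌉(A)^{s-⌊s⌋} for 0 ≤ s ≤ d and φ^s(A) := |det A|^{s/d} for s ≥ d. -/
open Matrix

/-- The singular value function `φ^s` of Falconer, defined from a list of singular
values `σ` (indexed decreasingly). -/
noncomputable def phiSV {d : ℕ} (σ : Matrix (Fin d) (Fin d) ℝ → Fin d → ℝ)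
    (s : ℝ) (A : Matrix (Fin d) (Fin d) ℝ) : ℝ :=
  if s ≤ d then
    (∏ i ∈ Finset.range ⌊s⌋₊, if h : i < d then σ A ⟨i, h⟩ else 1) *
      (if h : ⌊s⌋₊ < d then σ A ⟨⌊s⌋₊, h⟩ else 1) ^ (s - (⌊s⌋₊ : ℝ))
  else |A.det| ^ (s / (d : ℝ))

section Aux
open Finset

/-- Expansion of `det (Uᵀ * V)` by multilinearity in the rows coming from `U`. -/
lemma det_transpose_mul_expand {d k : ℕ} (U V : Matrix (Fin d) (Fin k) ℝ) :
    (Uᵀ * V).det = ∑ g : Fin k → Fin d, (∏ a, U (g a) a) * (V.submatrix g id).det := by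
  have h : (Uᵀ * V) = Matrix.of (fun a => ∑ x : Fin d, U x a • (fun b => V x b)) := by
    ext a b
    simp [Matrix.mul_apply, Finset.sum_apply]
  rw [h]
  have := (Matrix.detRowAlternating (R := ℝ) (n := Fin k)).toMultilinearMap.map_sum
    (g := fun a x => U x a • (fun b => V x b))
  simp only [AlternatingMap.coe_multilinearMap] at this
  rw [show ((Matrix.of fun a => ∑ x : Fin d, U x a • fun b => V x b).det)
      = Matrix.detRowAlternating (fun a => ∑ x : Fin d, U x a • fun b => V x b) from rfl, this]
  refine Finset.sum_congr rfl fun g _ => ?_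
  have h2 := (Matrix.detRowAlternating (R := ℝ) (n := Fin k)).toMultilinearMap.map_smul_univ
    (fun i => U (g i) i) (fun i b => V (g i) b)
  simp only [AlternatingMap.coe_multilinearMap] at h2
  rw [h2, smul_eq_mul]
  rfl

lemma image_orderEmbOfFin {d k : ℕ} (s : Finset (Fin d)) (hs : s.card = k) :
    Finset.image (fun a => s.orderEmbOfFin hs a) Finset.univ = s := by
  ext x
  simp only [Finset.mem_image, Finset.mem_univ, true_and]
  constructor
  · rintro ⟨a, rfl⟩; exact s.orderEmbOfFin_mem hs a
  · intro hx
    have := s.range_orderEmbOfFin hs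
    have : x ∈ Set.range (s.orderEmbOfFin hs) := by rw [this]; exact hx
    obtain ⟨a, ha⟩ := this
    exact ⟨a, ha⟩

lemma fiber_sum_eq {d k : ℕ} (U V : Matrix (Fin d) (Fin k) ℝ)
    (s : Finset (Fin d)) (hs : s.card = k) :
    ∑ g ∈ Finset.univ.filter (fun g : Fin k → Fin d => Finset.image g Finset.univ = s),
      (∏ a, U (g a) a) * (V.submatrix g id).det
    = (U.submatrix (s.orderEmbOfFin hs) id).det * (V.submatrix (s.orderEmbOfFin hs) id).det := by
  have hbij : ∑ π : Equiv.Perm (Fin k), Equiv.Perm.sign π •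
      ((∏ a, U (s.orderEmbOfFin hs (π a)) a) * (V.submatrix (s.orderEmbOfFin hs) id).det)
      = ∑ g ∈ Finset.univ.filter (fun g : Fin k → Fin d => Finset.image g Finset.univ = s),
      (∏ a, U (g a) a) * (V.submatrix g id).det := by
    refine Finset.sum_bij (i := fun (π : Equiv.Perm (Fin k)) _ =>
      (fun a => s.orderEmbOfFin hs (π a) : Fin k → Fin d)) ?_ ?_ ?_ ?_
    · -- membership
      intro π _
      simp only [Finset.mem_filter, Finset.mem_univ, true_and]
      rw [show (Finset.image (fun a => s.orderEmbOfFin hs (π a)) Finset.univ)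
          = Finset.image (fun a => s.orderEmbOfFin hs a) (Finset.image π Finset.univ) by
        rw [Finset.image_image]; rfl]
      rw [Finset.image_univ_equiv, image_orderEmbOfFin]
    · -- injectivity
      intro π₁ _ π₂ _ h
      exact Equiv.ext fun a => (s.orderEmbOfFin hs).injective (congrFun h a)
    · -- surjectivity
      intro g hg
      simp only [Finset.mem_filter, Finset.mem_univ, true_and] at hg
      have hginj : Function.Injective g := by
        have h2 : Set.InjOn g ↑(Finset.univ : Finset (Fin k)) :=
          Finset.injOn_of_card_image_eq (by
            rw [hg, hs, Finset.card_univ, Fintype.card_fin])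
        intro a b hab
        exact h2 (by simp) (by simp) hab
      have hmem : ∀ a, g a ∈ s := fun a => by
        rw [← hg]; exact Finset.mem_image_of_mem g (Finset.mem_univ a)
      set p : Fin k → Fin k := fun a => (s.orderIsoOfFin hs).symm ⟨g a, hmem a⟩ with hp
      have hpinj : Function.Injective p := by
        intro a b hab
        apply hginj
        have h3 := congrArg (s.orderIsoOfFin hs) hab
        simp only [hp, OrderIso.apply_symm_apply] at h3
        exact congrArg Subtype.val h3
      refine ⟨Equiv.ofBijective p (Finite.injective_iff_bijective.mp hpinj), Finset.mem_univ _, ?_⟩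
      funext a
      show s.orderEmbOfFin hs (p a) = g a
      rw [hp, ← Finset.coe_orderIsoOfFin_apply]
      simp
    · -- values
      intro π _
      have h1 : (V.submatrix (fun a => s.orderEmbOfFin hs (π a)) id)
          = (V.submatrix (s.orderEmbOfFin hs) id).submatrix π id := by
        ext i j; rfl
      rw [h1, Matrix.det_permute]
      rcases Int.units_eq_one_or (Equiv.Perm.sign π) with h | h <;>
        simp [h] <;> ring
  rw [← hbij]
  have h2 : (U.submatrix (s.orderEmbOfFin hs) id).det
      = ∑ π : Equiv.Perm (Fin k), Equiv.Perm.sign π • ∏ a, U (s.orderEmbOfFin hs (π a)) a := by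
    rw [Matrix.det_apply]; rfl
  rw [h2]
  simp_rw [← smul_mul_assoc]
  rw [← Finset.sum_mul]

lemma det_weighted_le {d k : ℕ} (W : Matrix (Fin d) (Fin k) ℝ) (c : Fin d → ℝ)
    (K : ℝ) (hK : 0 ≤ K)
    (hb : ∀ f : Fin k → Fin d, Function.Injective f → ∏ a, c (f a) ≤ K) :
    (Wᵀ * (Matrix.diagonal c * W)).det ≤ K * (Wᵀ * W).det := by
  set T : (Fin k → Fin d) → ℝ :=
    fun g => (∏ a, W (g a) a) * ((W.submatrix g id).det) with hT
  have hdet0 : ∀ g : Fin k → Fin d, ¬ Function.Injective g → (W.submatrix g id).det = 0 := by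
    intro g hg
    rw [Function.not_injective_iff] at hg
    obtain ⟨a, b, hab, hne⟩ := hg
    exact Matrix.det_zero_of_row_eq hne (by ext j; simp [hab])
  have hTzero : ∀ g : Fin k → Fin d, ¬ Function.Injective g → T g = 0 := by
    intro g hg
    rw [hT]; simp [hdet0 g hg]
  have key1 : (Wᵀ * (Matrix.diagonal c * W)).det
      = ∑ g : Fin k → Fin d, (∏ x ∈ Finset.image g Finset.univ, c x) * T g := by
    rw [det_transpose_mul_expand]
    refine Finset.sum_congr rfl fun g _ => ?_
    have h1 : ((Matrix.diagonal c * W).submatrix g id)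
        = Matrix.of (fun a b => c (g a) * (W.submatrix g id) a b) := by
      ext a b; simp [Matrix.diagonal_mul]
    rw [h1, Matrix.det_mul_column]
    by_cases hg : Function.Injective g
    · rw [Finset.prod_image (fun a _ b _ h => hg h)]
      rw [hT]; ring
    · rw [hTzero g hg]; simp [hdet0 g hg]
  have key2 : (Wᵀ * W).det = ∑ g : Fin k → Fin d, T g := by
    rw [det_transpose_mul_expand]
  rw [key1, key2, Finset.mul_sum]
  rw [← Finset.sum_fiberwise Finset.univ
    (fun g : Fin k → Fin d => Finset.image g Finset.univ)
    (fun g => (∏ x ∈ Finset.image g Finset.univ, c x) * T g)]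
  rw [← Finset.sum_fiberwise Finset.univ
    (fun g : Fin k → Fin d => Finset.image g Finset.univ)
    (fun g => K * T g)]
  refine Finset.sum_le_sum fun s _ => ?_
  have congr1 : ∑ g ∈ Finset.univ.filter
        (fun g : Fin k → Fin d => Finset.image g Finset.univ = s),
      (∏ x ∈ Finset.image g Finset.univ, c x) * T g
      = (∏ x ∈ s, c x) * ∑ g ∈ Finset.univ.filter
        (fun g : Fin k → Fin d => Finset.image g Finset.univ = s), T g := by
    rw [Finset.mul_sum]
    refine Finset.sum_congr rfl fun g hg => ?_
    rw [(Finset.mem_filter.mp hg).2]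
  rw [congr1, ← Finset.mul_sum]
  by_cases hsk : s.card = k
  · have hsq := fiber_sum_eq W W s hsk
    set S := ∑ g ∈ Finset.univ.filter
      (fun g : Fin k → Fin d => Finset.image g Finset.univ = s), T g with hS
    have hSnn : 0 ≤ S := by
      rw [hsq]; exact mul_self_nonneg _
    have hprod : ∏ x ∈ s, c x ≤ K := by
      have := hb (fun a => s.orderEmbOfFin hsk a) (s.orderEmbOfFin hsk).injective
      rwa [← image_orderEmbOfFin s hsk, Finset.prod_image
        (fun a _ b _ h => (s.orderEmbOfFin hsk).injective h)]
    exact mul_le_mul_of_nonneg_right hprod hSnn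
  · have hzero : ∑ g ∈ Finset.univ.filter
        (fun g : Fin k → Fin d => Finset.image g Finset.univ = s), T g = 0 := by
      refine Finset.sum_eq_zero fun g hg => ?_
      refine hTzero g fun hinj => hsk ?_
      rw [← (Finset.mem_filter.mp hg).2, Finset.card_image_of_injective _ hinj,
        Finset.card_univ, Fintype.card_fin]
    rw [hzero, mul_zero, mul_zero]

lemma star_eq_transpose' {n : ℕ} (U : Matrix (Fin n) (Fin n) ℝ) : star U = Uᵀ := by
  rw [Matrix.star_eq_conjTranspose, Matrix.conjTranspose_eq_transpose_of_trivial]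

/-- Compression bound via the spectral theorem. -/
lemma gram_bound {d k : ℕ} (M : Matrix (Fin d) (Fin d) ℝ) (N : Matrix (Fin d) (Fin k) ℝ)
    (K : ℝ) (hK : 0 ≤ K)
    (hb : ∀ f : Fin k → Fin d, Function.Injective f →
      ∏ a, (Matrix.isHermitian_conjTranspose_mul_self M).eigenvalues (f a) ≤ K) :
    ((M * N)ᵀ * (M * N)).det ≤ K * (Nᵀ * N).det := by
  set hH := Matrix.isHermitian_conjTranspose_mul_self M
  set U : Matrix (Fin d) (Fin d) ℝ := (hH.eigenvectorUnitary : Matrix (Fin d) (Fin d) ℝ) with hU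
  have hspec : Mᵀ * M = U * Matrix.diagonal hH.eigenvalues * Uᵀ := by
    have := hH.spectral_theorem
    rw [Unitary.conjStarAlgAut_apply, star_eq_transpose'] at this
    convert this using 3 <;> rfl
  have hUtU : Uᵀ * U = 1 := by
    rw [← star_eq_transpose']
    exact Matrix.mem_unitaryGroup_iff'.mp hH.eigenvectorUnitary.2
  have hUUt : U * Uᵀ = 1 := by
    rw [← star_eq_transpose']
    exact Matrix.mem_unitaryGroup_iff.mp hH.eigenvectorUnitary.2
  set W : Matrix (Fin d) (Fin k) ℝ := Uᵀ * N with hW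
  have h1 : (M * N)ᵀ * (M * N) = Wᵀ * (Matrix.diagonal hH.eigenvalues * W) := by
    rw [hW, Matrix.transpose_mul, Matrix.transpose_mul, Matrix.transpose_transpose]
    calc Nᵀ * Mᵀ * (M * N) = Nᵀ * (Mᵀ * M) * N := by
          rw [Matrix.mul_assoc, Matrix.mul_assoc, Matrix.mul_assoc]
      _ = Nᵀ * U * (Matrix.diagonal hH.eigenvalues * (Uᵀ * N)) := by
          rw [hspec]; rw [Matrix.mul_assoc, Matrix.mul_assoc, Matrix.mul_assoc, Matrix.mul_assoc]
  have h2 : Nᵀ * N = Wᵀ * W := by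
    rw [hW, Matrix.transpose_mul, Matrix.transpose_transpose, Matrix.mul_assoc,
      ← Matrix.mul_assoc U, hUUt, Matrix.one_mul]
  rw [h1, h2]
  exact det_weighted_le W _ K hK hb

/-- a strictly monotone map `Fin k → Fin d` satisfies `a ≤ f a`. -/
lemma strictMono_fin_le {k d : ℕ} (f : Fin k → Fin d) (hf : StrictMono f) (a : Fin k) :
    (a : ℕ) ≤ (f a : ℕ) := by
  obtain ⟨n, hn⟩ := a
  induction n with
  | zero => simp
  | succ m ih =>
    have hm : m < k := lt_trans (Nat.lt_succ_self m) hn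
    have h1 := ih hm
    have h2 : f ⟨m, hm⟩ < f ⟨m + 1, hn⟩ := hf (by simp [Fin.lt_def])
    rw [Fin.lt_def] at h2
    simp only [Fin.val_mk] at h1 h2 ⊢
    omega

section Horn

variable {d : ℕ} (σ : Matrix (Fin d) (Fin d) ℝ → Fin d → ℝ)

lemma eig_nonneg (M : Matrix (Fin d) (Fin d) ℝ) (i : Fin d) :
    0 ≤ (Matrix.isHermitian_conjTranspose_mul_self M).eigenvalues i := by
  have hps : (Mᵀ * M).PosSemidef := by
    have := Matrix.posSemidef_conjTranspose_mul_self M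
    rwa [Matrix.conjTranspose_eq_transpose_of_trivial] at this
  exact hps.eigenvalues_nonneg i

lemma prod_eig_le
    (hσ_mono : ∀ A : Matrix (Fin d) (Fin d) ℝ, ∀ i j : Fin d, i ≤ j → σ A j ≤ σ A i)
    (hσ_eig : ∀ A : Matrix (Fin d) (Fin d) ℝ, ∃ e : Fin d ≃ Fin d, ∀ i,
      σ A i = Real.sqrt ((Matrix.isHermitian_conjTranspose_mul_self A).eigenvalues (e i)))
    (M : Matrix (Fin d) (Fin d) ℝ) {k : ℕ} (hk : k ≤ d)
    (f : Fin k → Fin d) (hf : Function.Injective f) :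
    ∏ a, (Matrix.isHermitian_conjTranspose_mul_self M).eigenvalues (f a)
      ≤ ∏ a : Fin k, σ M (Fin.castLE hk a) ^ 2 := by
  obtain ⟨e, he⟩ := hσ_eig M
  have hσnn : ∀ i, 0 ≤ σ M i := fun i => (he i) ▸ Real.sqrt_nonneg _
  have hsq : ∀ i, σ M i ^ 2 = (Matrix.isHermitian_conjTranspose_mul_self M).eigenvalues (e i) := by
    intro i; rw [he i, Real.sq_sqrt (eig_nonneg M _)]
  have h1 : ∀ a, (Matrix.isHermitian_conjTranspose_mul_self M).eigenvalues (f a)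
      = σ M (e.symm (f a)) ^ 2 := by
    intro a; rw [hsq, Equiv.apply_symm_apply]
  rw [Finset.prod_congr rfl (fun a _ => h1 a)]
  set g : Fin k → Fin d := fun a => e.symm (f a) with hg
  have hginj : Function.Injective g := fun a b h => hf (e.symm.injective h)
  set s := Finset.image g Finset.univ with hs
  have hcard : s.card = k := by
    rw [hs, Finset.card_image_of_injective _ hginj, Finset.card_univ, Fintype.card_fin]
  have e1 : ∏ x ∈ s, σ M x ^ 2 = ∏ a : Fin k, σ M (g a) ^ 2 := by
    rw [hs]; exact Finset.prod_image (fun a _ b _ h => hginj h)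
  have e2 : ∏ x ∈ s, σ M x ^ 2 = ∏ a : Fin k, σ M (s.orderEmbOfFin hcard a) ^ 2 := by
    conv_lhs => rw [← image_orderEmbOfFin s hcard]
    exact Finset.prod_image (fun a _ b _ h => (s.orderEmbOfFin hcard).injective h)
  rw [← e1, e2]
  refine Finset.prod_le_prod (fun a _ => sq_nonneg _) (fun a _ => ?_)
  have hle : Fin.castLE hk a ≤ s.orderEmbOfFin hcard a := by
    rw [Fin.le_def]
    exact strictMono_fin_le _ (s.orderEmbOfFin hcard).strictMono a
  exact pow_le_pow_left₀ (hσnn _) (hσ_mono M _ _ hle) 2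

lemma gram_attain
    (hσ_eig : ∀ A : Matrix (Fin d) (Fin d) ℝ, ∃ e : Fin d ≃ Fin d, ∀ i,
      σ A i = Real.sqrt ((Matrix.isHermitian_conjTranspose_mul_self A).eigenvalues (e i)))
    (M : Matrix (Fin d) (Fin d) ℝ) {k : ℕ} (hk : k ≤ d) :
    ∃ Q : Matrix (Fin d) (Fin k) ℝ, Qᵀ * Q = 1 ∧
      ((M * Q)ᵀ * (M * Q)).det = ∏ a : Fin k, σ M (Fin.castLE hk a) ^ 2 := by
  set hH := Matrix.isHermitian_conjTranspose_mul_self M with hHdef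
  obtain ⟨e, he⟩ := hσ_eig M
  have hsq : ∀ i, σ M i ^ 2 = hH.eigenvalues (e i) := by
    intro i; rw [he i, Real.sq_sqrt (eig_nonneg M _)]
  set U : Matrix (Fin d) (Fin d) ℝ := (hH.eigenvectorUnitary : Matrix (Fin d) (Fin d) ℝ) with hU
  have hUtU : Uᵀ * U = 1 := by
    rw [← star_eq_transpose']
    exact Matrix.mem_unitaryGroup_iff'.mp hH.eigenvectorUnitary.2
  have hdiag : Uᵀ * (Mᵀ * M) * U = Matrix.diagonal hH.eigenvalues := by
    have := hH.spectral_theorem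
    rw [Unitary.conjStarAlgAut_apply, star_eq_transpose'] at this
    have h' : Mᵀ * M = U * Matrix.diagonal hH.eigenvalues * Uᵀ := by convert this using 3 <;> rfl
    rw [h', show Uᵀ * (U * Matrix.diagonal hH.eigenvalues * Uᵀ) * U
        = (Uᵀ * U) * Matrix.diagonal hH.eigenvalues * (Uᵀ * U) by simp only [Matrix.mul_assoc],
      hUtU, Matrix.one_mul, Matrix.mul_one]
  set f : Fin k → Fin d := fun a => e (Fin.castLE hk a) with hf
  have hfinj : Function.Injective f :=
    fun a b h => Fin.castLE_injective hk (e.injective h)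
  refine ⟨U.submatrix id f, ?_, ?_⟩
  · rw [Matrix.transpose_submatrix,
      ← Matrix.submatrix_mul Uᵀ U f id f Function.bijective_id,
      hUtU, Matrix.submatrix_one f hfinj]
  · have hQSQ : (U.submatrix id f)ᵀ * (Mᵀ * M) * (U.submatrix id f)
        = Matrix.diagonal (fun a => hH.eigenvalues (f a)) := by
      rw [Matrix.transpose_submatrix]
      have s1 : Uᵀ.submatrix f id * (Mᵀ * M) = (Uᵀ * (Mᵀ * M)).submatrix f id := by
        rw [Matrix.submatrix_mul Uᵀ (Mᵀ * M) f id id Function.bijective_id,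
          Matrix.submatrix_id_id]
      rw [s1]
      have s2 : (Uᵀ * (Mᵀ * M)).submatrix f id * U.submatrix id f
          = ((Uᵀ * (Mᵀ * M)) * U).submatrix f f :=
        (Matrix.submatrix_mul (Uᵀ * (Mᵀ * M)) U f id f Function.bijective_id).symm
      rw [s2, hdiag, Matrix.submatrix_diagonal _ f hfinj]
      rfl
    have : (M * U.submatrix id f)ᵀ * (M * U.submatrix id f)
        = (U.submatrix id f)ᵀ * (Mᵀ * M) * (U.submatrix id f) := by
      rw [Matrix.transpose_mul]
      rw [Matrix.mul_assoc, Matrix.mul_assoc, Matrix.mul_assoc]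
    rw [this, hQSQ, Matrix.det_diagonal]
    refine Finset.prod_congr rfl fun a _ => ?_
    rw [hsq]

lemma horn
    (hσ_mono : ∀ A : Matrix (Fin d) (Fin d) ℝ, ∀ i j : Fin d, i ≤ j → σ A j ≤ σ A i)
    (hσ_eig : ∀ A : Matrix (Fin d) (Fin d) ℝ, ∃ e : Fin d ≃ Fin d, ∀ i,
      σ A i = Real.sqrt ((Matrix.isHermitian_conjTranspose_mul_self A).eigenvalues (e i)))
    (A B : Matrix (Fin d) (Fin d) ℝ) {k : ℕ} (hk : k ≤ d) :
    ∏ a : Fin k, σ (A * B) (Fin.castLE hk a)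
      ≤ (∏ a : Fin k, σ A (Fin.castLE hk a)) * ∏ a : Fin k, σ B (Fin.castLE hk a) := by
  have hσnn : ∀ M : Matrix (Fin d) (Fin d) ℝ, ∀ i, 0 ≤ σ M i := by
    intro M i
    obtain ⟨e, he⟩ := hσ_eig M
    rw [he i]; exact Real.sqrt_nonneg _
  obtain ⟨Q, hQ1, hQ2⟩ := gram_attain σ hσ_eig (A * B) hk
  have hsqA : (0:ℝ) ≤ ∏ a : Fin k, σ A (Fin.castLE hk a) ^ 2 :=
    Finset.prod_nonneg fun a _ => sq_nonneg _
  have hsqB : (0:ℝ) ≤ ∏ a : Fin k, σ B (Fin.castLE hk a) ^ 2 :=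
    Finset.prod_nonneg fun a _ => sq_nonneg _
  have c1 : ((A * B * Q)ᵀ * (A * B * Q)).det
      ≤ (∏ a : Fin k, σ A (Fin.castLE hk a) ^ 2) * ((B * Q)ᵀ * (B * Q)).det := by
    rw [Matrix.mul_assoc]
    exact gram_bound A (B * Q) _ hsqA (fun f hf => prod_eig_le σ hσ_mono hσ_eig A hk f hf)
  have c2 : ((B * Q)ᵀ * (B * Q)).det
      ≤ (∏ a : Fin k, σ B (Fin.castLE hk a) ^ 2) * ((Qᵀ * Q)).det :=
    gram_bound B Q _ hsqB (fun f hf => prod_eig_le σ hσ_mono hσ_eig B hk f hf)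
  rw [hQ1, Matrix.det_one, mul_one] at c2
  have key : (∏ a : Fin k, σ (A * B) (Fin.castLE hk a)) ^ 2
      ≤ ((∏ a : Fin k, σ A (Fin.castLE hk a)) * ∏ a : Fin k, σ B (Fin.castLE hk a)) ^ 2 := by
    rw [mul_pow, ← Finset.prod_pow, ← Finset.prod_pow, ← Finset.prod_pow, ← hQ2]
    calc ((A * B * Q)ᵀ * (A * B * Q)).det
        ≤ (∏ a : Fin k, σ A (Fin.castLE hk a) ^ 2) * ((B * Q)ᵀ * (B * Q)).det := c1
      _ ≤ (∏ a : Fin k, σ A (Fin.castLE hk a) ^ 2)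
          * (∏ a : Fin k, σ B (Fin.castLE hk a) ^ 2) :=
        mul_le_mul_of_nonneg_left c2 hsqA
  have h1 : (0:ℝ) ≤ ∏ a : Fin k, σ (A * B) (Fin.castLE hk a) :=
    Finset.prod_nonneg fun a _ => hσnn _ _
  have h2 : (0:ℝ) ≤ (∏ a : Fin k, σ A (Fin.castLE hk a)) * ∏ a : Fin k, σ B (Fin.castLE hk a) :=
    mul_nonneg (Finset.prod_nonneg fun a _ => hσnn _ _) (Finset.prod_nonneg fun a _ => hσnn _ _)
  nlinarith [key, h1, h2]

end Horn

lemma sigma_pos {d : ℕ} (σ : Matrix (Fin d) (Fin d) ℝ → Fin d → ℝ)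
    (hσ_eig : ∀ A : Matrix (Fin d) (Fin d) ℝ, ∃ e : Fin d ≃ Fin d, ∀ i,
      σ A i = Real.sqrt ((Matrix.isHermitian_conjTranspose_mul_self A).eigenvalues (e i)))
    (M : Matrix (Fin d) (Fin d) ℝ) (hM : IsUnit M.det) (i : Fin d) : 0 < σ M i := by
  obtain ⟨e, he⟩ := hσ_eig M
  have hdet : (Mᵀ * M).det
      = ∏ j, (Matrix.isHermitian_conjTranspose_mul_self M).eigenvalues j := by
    simpa using (Matrix.isHermitian_conjTranspose_mul_self M).det_eq_prod_eigenvalues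
  have hdet2 : (Mᵀ * M).det ≠ 0 := by
    rw [Matrix.det_mul, Matrix.det_transpose]
    exact mul_ne_zero hM.ne_zero hM.ne_zero
  have hne : (Matrix.isHermitian_conjTranspose_mul_self M).eigenvalues (e i) ≠ 0 := by
    rw [hdet] at hdet2
    exact Finset.prod_ne_zero_iff.mp hdet2 (e i) (Finset.mem_univ _)
  rw [he i]
  exact Real.sqrt_pos.2 (lt_of_le_of_ne (eig_nonneg M (e i)) (Ne.symm hne))

lemma Pk_eq {d : ℕ} (σ : Matrix (Fin d) (Fin d) ℝ → Fin d → ℝ)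
    (M : Matrix (Fin d) (Fin d) ℝ) {k : ℕ} (hk : k ≤ d) :
    (∏ i ∈ Finset.range k, if h : i < d then σ M ⟨i, h⟩ else 1)
      = ∏ a : Fin k, σ M (Fin.castLE hk a) := by
  rw [← Fin.prod_univ_eq_prod_range (fun i => if h : i < d then σ M ⟨i, h⟩ else 1) k]
  refine Finset.prod_congr rfl fun a _ => ?_
  rw [dif_pos (lt_of_lt_of_le a.2 hk)]
  rfl

end Aux

/-- for invertible `A B` and `s ≥ 0`, `φ^s(AB) ≤ φ^s(A) φ^s(B)`, where
`σ A` lists the singular values of `A` (square roots of the eigenvalues of `AᵀA`)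
in decreasing order. -/
theorem stmt0 {d : ℕ} (hd : 0 < d)
    (σ : Matrix (Fin d) (Fin d) ℝ → Fin d → ℝ)
    (hσ_mono : ∀ A : Matrix (Fin d) (Fin d) ℝ, ∀ i j : Fin d, i ≤ j → σ A j ≤ σ A i)
    (hσ_eig : ∀ A : Matrix (Fin d) (Fin d) ℝ, ∃ e : Fin d ≃ Fin d, ∀ i,
      σ A i = Real.sqrt ((Matrix.isHermitian_conjTranspose_mul_self A).eigenvalues (e i)))
    (A B : Matrix (Fin d) (Fin d) ℝ) (hA : IsUnit A.det) (hB : IsUnit B.det)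
    (s : ℝ) (hs : 0 ≤ s) :
    phiSV σ s (A * B) ≤ phiSV σ s A * phiSV σ s B := by
  by_cases hsd : s ≤ (d : ℝ)
  · simp only [phiSV, if_pos hsd]
    set m := ⌊s⌋₊ with hm
    have hmle : (m : ℝ) ≤ s := Nat.floor_le hs
    have hmd : m ≤ d := by exact_mod_cast (hmle.trans hsd)
    by_cases hlt : m < d
    · set θ := s - (m : ℝ) with hθ
      have hθ0 : 0 ≤ θ := sub_nonneg.2 hmle
      have hθ1 : 0 ≤ 1 - θ := by
        have := Nat.lt_floor_add_one s
        simp only [hθ]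
        push_cast at this ⊢
        linarith
      have hABdet : IsUnit (A * B).det := by rw [Matrix.det_mul]; exact hA.mul hB
      have hm1d : m + 1 ≤ d := hlt
      -- the interpolation identity
      have hid : ∀ M : Matrix (Fin d) (Fin d) ℝ, IsUnit M.det →
          (∏ i ∈ Finset.range m, if h : i < d then σ M ⟨i, h⟩ else 1) *
            (if h : m < d then σ M ⟨m, h⟩ else 1) ^ θ
          = (∏ a : Fin m, σ M (Fin.castLE hmd a)) ^ (1 - θ)
            * (∏ a : Fin (m+1), σ M (Fin.castLE hm1d a)) ^ θ := by
        intro M hM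
        have hpos : ∀ i, 0 < σ M i := sigma_pos σ hσ_eig M hM
        have hPpos : 0 < ∏ a : Fin m, σ M (Fin.castLE hmd a) :=
          Finset.prod_pos fun a _ => hpos _
        have hsucc : (∏ a : Fin (m+1), σ M (Fin.castLE hm1d a))
            = (∏ a : Fin m, σ M (Fin.castLE hmd a)) * σ M ⟨m, hlt⟩ := by
          rw [Fin.prod_univ_castSucc]
          rfl
        rw [dif_pos hlt, Pk_eq σ M hmd, hsucc,
          Real.mul_rpow hPpos.le (hpos _).le, ← mul_assoc,
          ← Real.rpow_add hPpos, sub_add_cancel, Real.rpow_one]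
      rw [hid (A * B) hABdet, hid A hA, hid B hB]
      -- now use horn for m and m+1
      have h1 := horn σ hσ_mono hσ_eig A B hmd
      have h2 := horn σ hσ_mono hσ_eig A B hm1d
      have hnnAB : (0:ℝ) ≤ ∏ a : Fin m, σ (A*B) (Fin.castLE hmd a) :=
        Finset.prod_nonneg fun a _ => (sigma_pos σ hσ_eig _ hABdet _).le
      have hnnAB' : (0:ℝ) ≤ ∏ a : Fin (m+1), σ (A*B) (Fin.castLE hm1d a) :=
        Finset.prod_nonneg fun a _ => (sigma_pos σ hσ_eig _ hABdet _).le
      have hnnA : (0:ℝ) ≤ ∏ a : Fin m, σ A (Fin.castLE hmd a) :=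
        Finset.prod_nonneg fun a _ => (sigma_pos σ hσ_eig _ hA _).le
      have hnnB : (0:ℝ) ≤ ∏ a : Fin m, σ B (Fin.castLE hmd a) :=
        Finset.prod_nonneg fun a _ => (sigma_pos σ hσ_eig _ hB _).le
      have hnnA' : (0:ℝ) ≤ ∏ a : Fin (m+1), σ A (Fin.castLE hm1d a) :=
        Finset.prod_nonneg fun a _ => (sigma_pos σ hσ_eig _ hA _).le
      have hnnB' : (0:ℝ) ≤ ∏ a : Fin (m+1), σ B (Fin.castLE hm1d a) :=
        Finset.prod_nonneg fun a _ => (sigma_pos σ hσ_eig _ hB _).le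
      calc (∏ a : Fin m, σ (A*B) (Fin.castLE hmd a)) ^ (1 - θ)
            * (∏ a : Fin (m+1), σ (A*B) (Fin.castLE hm1d a)) ^ θ
          ≤ ((∏ a : Fin m, σ A (Fin.castLE hmd a)) * ∏ a : Fin m, σ B (Fin.castLE hmd a)) ^ (1-θ)
            * ((∏ a : Fin (m+1), σ A (Fin.castLE hm1d a))
              * ∏ a : Fin (m+1), σ B (Fin.castLE hm1d a)) ^ θ := by
            exact mul_le_mul (Real.rpow_le_rpow hnnAB h1 hθ1)
              (Real.rpow_le_rpow hnnAB' h2 hθ0)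
              (Real.rpow_nonneg hnnAB' θ) (Real.rpow_nonneg (mul_nonneg hnnA hnnB) _)
        _ = _ := by
            rw [Real.mul_rpow hnnA hnnB, Real.mul_rpow hnnA' hnnB']
            ring
    · simp only [dif_neg hlt, Real.one_rpow, mul_one]
      rw [Pk_eq σ (A*B) hmd, Pk_eq σ A hmd, Pk_eq σ B hmd]
      exact horn σ hσ_mono hσ_eig A B hmd
  · simp only [phiSV, if_neg hsd]
    rw [Matrix.det_mul, abs_mul, Real.mul_rpow (abs_nonneg _) (abs_nonneg _)]
end

section
/- Let Γ be an irreducible subsemigroup of GL_d(ℝ) (viewed inside the algebra of linear endomorphisms of ℝ^d) such that every element of the closed cone cl(ℝ·Γ) = closure of {βA : A ∈ Γ, β ∈ ℝ} is either invertible or nilpotent. Then the only nilpotent element of cl(ℝ·Γ) is the zero map, and consequently Γ is a bounded subset of GL_d(ℝ) whenever each element of Γ has all eigenvalues of absolute value 1 and determinant of absolute value 1. -/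
open Matrix

attribute [local instance] Matrix.normedAddCommGroup Matrix.normedSpace

private lemma range_sq_lt_aux {d : ℕ} (f : Module.End ℝ (Fin d → ℝ)) (hf : IsNilpotent f)
    (h0 : f ≠ 0) :
    Module.finrank ℝ (LinearMap.range (f * f)) < Module.finrank ℝ (LinearMap.range f) := by
  have hle : LinearMap.range (f * f) ≤ LinearMap.range f := by
    rintro x ⟨y, rfl⟩; exact ⟨f y, rfl⟩
  rcases lt_or_eq_of_le (Submodule.finrank_mono hle) with h | h
  · exact h
  · exfalso
    have heq : LinearMap.range (f * f) = LinearMap.range f :=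
      Submodule.eq_of_le_of_finrank_le hle h.ge
    have hpow : ∀ n : ℕ, LinearMap.range (f ^ (n + 1)) = LinearMap.range f := by
      intro n
      induction n with
      | zero => rw [pow_one]
      | succ n ih =>
        rw [pow_succ']
        have : LinearMap.range ((f * f ^ (n+1) : Module.End ℝ (Fin d → ℝ))) =
            Submodule.map f (LinearMap.range (f ^ (n+1))) := LinearMap.range_comp _ _
        rw [this, ih]
        rw [← LinearMap.range_comp]
        exact heq
    obtain ⟨k, hk⟩ := hf
    rcases k with _ | k
    · apply h0
      have h1 : (1 : Module.End ℝ (Fin d → ℝ)) = 0 := by rw [← pow_zero f, hk]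
      calc f = 1 * f := (one_mul f).symm
        _ = 0 * f := by rw [h1]
        _ = 0 := zero_mul f
    · have := hpow k
      rw [hk] at this
      apply h0
      rw [← LinearMap.range_eq_bot, ← this, LinearMap.range_eq_bot]

private lemma mulVecLin_pow' {d : ℕ} (B : Matrix (Fin d) (Fin d) ℝ) (k : ℕ) :
    (B ^ k).mulVecLin = (B.mulVecLin) ^ k := by
  induction k with
  | zero => simp [Matrix.mulVecLin_one]; rfl
  | succ k ih => rw [pow_succ, Matrix.mulVecLin_mul, ih, pow_succ]; rfl

private lemma mulVecLin_ne_zero {d : ℕ} {B : Matrix (Fin d) (Fin d) ℝ} (h : B ≠ 0) :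
    B.mulVecLin ≠ 0 := by
  intro hc
  apply h
  ext i j
  have := congrFun (congrArg (fun g => g.toFun) hc) (Pi.single j 1)
  simp [Matrix.mulVecLin_apply, Matrix.mulVec_single] at this
  exact congrFun this i

private lemma matrix_rank_sq_lt {d : ℕ} (B : Matrix (Fin d) (Fin d) ℝ) (hB : IsNilpotent B)
    (h0 : B ≠ 0) : (B * B).rank < B.rank := by
  have hnil : IsNilpotent (B.mulVecLin : Module.End ℝ (Fin d → ℝ)) := by
    obtain ⟨k, hk⟩ := hB
    exact ⟨k, by rw [← mulVecLin_pow', hk, Matrix.mulVecLin_zero]⟩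
  have h1 := range_sq_lt_aux B.mulVecLin hnil (mulVecLin_ne_zero h0)
  rw [Matrix.rank, Matrix.rank, Matrix.mulVecLin_mul]
  exact h1

/-- if `Γ` is an irreducible subsemigroup of `GL_d(ℝ)` such that every
element of the closed cone `cl(ℝ·Γ)` is invertible or nilpotent, then the only
nilpotent element of `cl(ℝ·Γ)` is zero; consequently `Γ` is bounded whenever each of
its elements has all eigenvalues of absolute value `1` and determinant of absolute
value `1`. -/
theorem stmt5 {d : ℕ}
    (Γ : Subsemigroup (Matrix (Fin d) (Fin d) ℝ))
    (hΓ : ∀ A ∈ Γ, IsUnit A.det)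
    (hirr : ∀ W : Submodule ℝ (Fin d → ℝ),
      (∀ A ∈ Γ, ∀ x ∈ W, A.mulVec x ∈ W) → W = ⊥ ∨ W = ⊤)
    (hdich : ∀ B ∈ closure {B : Matrix (Fin d) (Fin d) ℝ | ∃ A ∈ Γ, ∃ β : ℝ, B = β • A},
      IsUnit B.det ∨ IsNilpotent B) :
    (∀ B ∈ closure {B : Matrix (Fin d) (Fin d) ℝ | ∃ A ∈ Γ, ∃ β : ℝ, B = β • A},
      IsNilpotent B → B = 0) ∧
    ((∀ A ∈ Γ, (∀ μ ∈ spectrum ℂ (A.map (algebraMap ℝ ℂ)), ‖μ‖ = 1) ∧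
        |A.det| = 1) →
      ∃ R : ℝ, ∀ A ∈ Γ, ∀ i j : Fin d, |A i j| ≤ R) := by
  set s : Set (Matrix (Fin d) (Fin d) ℝ) := {B | ∃ A ∈ Γ, ∃ β : ℝ, B = β • A} with hsdef
  have hsmul : ∀ x ∈ s, ∀ y ∈ s, x * y ∈ s := by
    rintro x ⟨A, hA, β, rfl⟩ y ⟨A', hA', β', rfl⟩
    exact ⟨A * A', Γ.mul_mem hA hA', β * β', smul_mul_smul_comm β A β' A'⟩
  have hcmul : ∀ x ∈ closure s, ∀ y ∈ closure s, x * y ∈ closure s := by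
    let S0 : Subsemigroup (Matrix (Fin d) (Fin d) ℝ) :=
      ⟨s, fun {a b} ha hb => hsmul a ha b hb⟩
    intro x hx y hy
    exact S0.topologicalClosure.mul_mem hx hy
  have hΓs : ∀ A ∈ Γ, A ∈ closure s := fun A hA =>
    subset_closure ⟨A, hA, 1, (one_smul ℝ A).symm⟩
  have part1 : ∀ B ∈ closure s, IsNilpotent B → B = 0 := by
    by_contra hcon
    push_neg at hcon
    obtain ⟨B0, hB0c, hB0n, hB0ne⟩ := hcon
    set S : Set ℕ := {n | ∃ C, C ∈ closure s ∧ IsNilpotent C ∧ C ≠ 0 ∧ C.rank = n} with hSdef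
    have hSne : S.Nonempty := ⟨B0.rank, B0, hB0c, hB0n, hB0ne, rfl⟩
    obtain ⟨B, hBc, hBn, hBne, hBr⟩ := Nat.sInf_mem hSne
    have sqnil : ∀ C : Matrix (Fin d) (Fin d) ℝ, IsNilpotent C → IsNilpotent (C * C) := by
      rintro C ⟨k, hk⟩
      exact ⟨k, by rw [← pow_two, ← pow_mul, two_mul, pow_add, hk, zero_mul]⟩
    have hB2 : B * B = 0 := by
      by_contra h2
      have hmem : (B * B).rank ∈ S := ⟨B * B, hcmul B hBc B hBc, sqnil B hBn, h2, rfl⟩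
      have hle := Nat.sInf_le hmem
      have hlt := matrix_rank_sq_lt B hBn hBne
      omega
    have key : ∃ A ∈ Γ, B * A * B ≠ 0 := by
      by_contra hknot
      push_neg at hknot
      set T : Set (Fin d → ℝ) :=
        Set.range B.mulVec ∪ {y | ∃ A ∈ Γ, ∃ v, y = A.mulVec (B.mulVec v)} with hTdef
      have hinv : ∀ A ∈ Γ, ∀ x ∈ Submodule.span ℝ T, A.mulVec x ∈ Submodule.span ℝ T := by
        intro A hA x hx
        induction hx using Submodule.span_induction with
        | mem y hy =>
          rcases hy with ⟨v, rfl⟩ | ⟨A', hA', v, rfl⟩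
          · exact Submodule.subset_span (Or.inr ⟨A, hA, v, rfl⟩)
          · refine Submodule.subset_span (Or.inr ⟨A * A', Γ.mul_mem hA hA', v, ?_⟩)
            rw [Matrix.mulVec_mulVec]
        | zero => rw [Matrix.mulVec_zero]; exact Submodule.zero_mem _
        | add y z hy hz hy' hz' => rw [Matrix.mulVec_add]; exact Submodule.add_mem _ hy' hz'
        | smul c y hy hy' => rw [Matrix.mulVec_smul]; exact Submodule.smul_mem _ c hy'
      have hBv : ∃ v, B.mulVec v ≠ 0 := by
        by_contra hv
        push_neg at hv
        apply hBne
        ext i j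
        have := congrFun (hv (Pi.single j 1)) i
        simpa using this
      rcases hirr (Submodule.span ℝ T) hinv with hbot | htop
      · obtain ⟨v, hv⟩ := hBv
        have hmem : B.mulVec v ∈ Submodule.span ℝ T :=
          Submodule.subset_span (Or.inl ⟨v, rfl⟩)
        rw [hbot, Submodule.mem_bot] at hmem
        exact hv hmem
      · have hker : Submodule.span ℝ T ≤ LinearMap.ker B.mulVecLin := by
          rw [Submodule.span_le]
          rintro y (⟨v, rfl⟩ | ⟨A, hA, v, rfl⟩) <;>
            rw [SetLike.mem_coe, LinearMap.mem_ker, Matrix.mulVecLin_apply]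
          · rw [Matrix.mulVec_mulVec, hB2, Matrix.zero_mulVec]
          · rw [Matrix.mulVec_mulVec, Matrix.mulVec_mulVec, hknot A hA, Matrix.zero_mulVec]
        rw [htop] at hker
        have : B.mulVecLin = 0 := by
          apply LinearMap.ker_eq_top.mp
          exact top_unique hker
        exact mulVecLin_ne_zero hBne this
    obtain ⟨A, hA, hBAB⟩ := key
    have hdne : Nonempty (Fin d) := by
      rcases Nat.eq_zero_or_pos d with rfl | hd
      · exact absurd (Subsingleton.elim B 0) hBne
      · exact ⟨⟨0, hd⟩⟩
    have hdetB : B.det = 0 := by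
      obtain ⟨k, hk⟩ := hBn
      have hk0 : k ≠ 0 := by
        rintro rfl
        rw [pow_zero] at hk
        apply hBne
        calc B = B * 1 := (mul_one B).symm
          _ = B * 0 := by rw [hk]
          _ = 0 := mul_zero B
      have hdk : B.det ^ k = 0 := by rw [← Matrix.det_pow, hk, Matrix.det_zero]
      exact pow_eq_zero_iff hk0 |>.mp hdk
    have hNc : (A * B) ∈ closure s := hcmul A (hΓs A hA) B hBc
    have hNnil : IsNilpotent (A * B) := by
      rcases hdich (A * B) hNc with hu | hn
      · rw [Matrix.det_mul, hdetB, mul_zero] at hu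
        exact absurd hu not_isUnit_zero
      · exact hn
    have hNN : (A * B) * (A * B) ≠ 0 := by
      intro hz
      apply hBAB
      have hAinv := Matrix.nonsing_inv_mul A (hΓ A hA)
      calc B * A * B = (A⁻¹ * A) * (B * A * B) := by rw [hAinv, one_mul]
        _ = A⁻¹ * ((A * B) * (A * B)) := by noncomm_ring
        _ = 0 := by rw [hz, mul_zero]
    have hNne : A * B ≠ 0 := fun h => hNN (by rw [h, mul_zero])
    have hNmem : ((A * B) * (A * B)).rank ∈ S :=
      ⟨(A * B) * (A * B), hcmul _ hNc _ hNc, sqnil _ hNnil, hNN, rfl⟩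
    have h1 := Nat.sInf_le hNmem
    have h2 := matrix_rank_sq_lt (A * B) hNnil hNne
    have h3 : (A * B).rank ≤ B.rank := Matrix.rank_mul_le_right A B
    omega
  refine ⟨part1, ?_⟩
  intro hAΓ
  by_cases hd : d = 0
  · subst hd; exact ⟨0, fun A _ i j => i.elim0⟩
  have hd1 : 1 ≤ d := Nat.one_le_iff_ne_zero.mpr hd
  by_contra hub
  push_neg at hub
  have hub' : ∀ n : ℕ, ∃ A ∈ Γ, ∃ i j : Fin d, (n : ℝ) < |A i j| := fun n => by
    obtain ⟨A, hA, i, j, h⟩ := hub n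
    exact ⟨A, hA, i, j, h⟩
  choose A hAmem i j hAbig using hub'
  have hnorm : ∀ n : ℕ, (n : ℝ) < ‖A n‖ := fun n => by
    calc (n : ℝ) < |A n (i n) (j n)| := hAbig n
      _ = ‖A n (i n) (j n)‖ := (Real.norm_eq_abs _).symm
      _ ≤ ‖A n‖ := (A n).norm_entry_le_entrywise_sup_norm
  have hpos : ∀ n : ℕ, 0 < ‖A n‖ := fun n => lt_of_le_of_lt (Nat.cast_nonneg n) (hnorm n)
  set Bs : ℕ → Matrix (Fin d) (Fin d) ℝ := fun n => ‖A n‖⁻¹ • A n with hBsdef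
  have hBnorm : ∀ n, ‖Bs n‖ = 1 := fun n => by
    rw [hBsdef]
    simp only [norm_smul, norm_inv, norm_norm]
    exact inv_mul_cancel₀ (hpos n).ne'
  have hBmem : ∀ n, Bs n ∈ s := fun n => ⟨A n, hAmem n, _, rfl⟩
  have hsph : ∀ n, Bs n ∈ Metric.sphere (0 : Matrix (Fin d) (Fin d) ℝ) 1 := fun n => by
    rw [mem_sphere_zero_iff_norm]; exact hBnorm n
  obtain ⟨L, hLs, φ, hφ, hconv⟩ :=
    (isCompact_sphere (0 : Matrix (Fin d) (Fin d) ℝ) 1).tendsto_subseq hsph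
  have hLc : L ∈ closure s :=
    mem_closure_of_tendsto hconv (Filter.Eventually.of_forall fun n => hBmem (φ n))
  have hdetabs : ∀ n : ℕ, |(Bs n).det| = ‖A n‖⁻¹ ^ d := by
    intro n
    rw [hBsdef]
    simp only [Matrix.det_smul, Fintype.card_fin]
    rw [abs_mul, abs_pow, abs_inv, abs_norm, (hAΓ (A n) (hAmem n)).2, mul_one]
  have hdet1 : Filter.Tendsto (fun n => |((Bs ∘ φ) n).det|) Filter.atTop (nhds |L.det|) := by
    have hc : Continuous fun M : Matrix (Fin d) (Fin d) ℝ => M.det :=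
      Continuous.matrix_det continuous_id
    exact ((hc.tendsto L).comp hconv).abs
  have hdet0 : Filter.Tendsto (fun n => |((Bs ∘ φ) n).det|) Filter.atTop (nhds 0) := by
    apply squeeze_zero' (g := fun n : ℕ => 1 / (n : ℝ))
    · exact Filter.Eventually.of_forall fun n => abs_nonneg _
    · rw [Filter.eventually_atTop]
      refine ⟨1, fun n hn => ?_⟩
      have hφn : (n : ℝ) ≤ (φ n : ℝ) := Nat.cast_le.mpr hφ.le_apply
      have h1 : (1 : ℝ) ≤ ‖A (φ n)‖ := by
        calc (1 : ℝ) ≤ (n : ℝ) := by exact_mod_cast hn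
          _ ≤ (φ n : ℝ) := hφn
          _ ≤ ‖A (φ n)‖ := (hnorm (φ n)).le
      have hinv1 : ‖A (φ n)‖⁻¹ ≤ 1 := inv_le_one_of_one_le₀ h1
      have hinv0 : (0 : ℝ) ≤ ‖A (φ n)‖⁻¹ := inv_nonneg.mpr (hpos (φ n)).le
      calc |((Bs ∘ φ) n).det| = ‖A (φ n)‖⁻¹ ^ d := hdetabs (φ n)
        _ ≤ ‖A (φ n)‖⁻¹ := pow_le_of_le_one hinv0 hinv1 hd
        _ ≤ (n : ℝ)⁻¹ := by
            apply inv_anti₀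
            · exact_mod_cast Nat.lt_of_lt_of_le Nat.zero_lt_one hn
            · exact le_trans hφn (hnorm (φ n)).le
        _ = 1 / (n : ℝ) := (one_div _).symm
    · exact tendsto_one_div_atTop_nhds_zero_nat
  have hLdet : L.det = 0 := abs_eq_zero.mp (tendsto_nhds_unique hdet1 hdet0)
  have hLnil : IsNilpotent L := by
    rcases hdich L hLc with hu | hn
    · rw [hLdet] at hu; exact absurd hu not_isUnit_zero
    · exact hn
  have hL0 : L = 0 := part1 L hLc hLnil
  have : ‖L‖ = 1 := mem_sphere_zero_iff_norm.mp hLs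
  rw [hL0, norm_zero] at this
  exact absurd this (by norm_num)
end

section
/- Let G ≤ GL_d(ℝ) be a group such that for every g ∈ G the quantity ‖(|det g|^{-1/d} g)^{∧k}‖ ≤ K for some fixed k with 1 ≤ k ≤ d-1 and constant K > 0, where ∧k denotes the k-th exterior power. Then for every g ∈ G, writing h := |det g|^{-1/d} g, one has ‖h‖ ≤ K^{(d-1)/k} and ‖h^{-1}‖ ≤ K^{(d-1)/k}; consequently the group {|det g|^{-1/d} g : g ∈ G} is contained in a compact subset of GL_d(ℝ). -/
open Matrix
lemma det_sub_smul_eq {d : ℕ} {M : Matrix (Fin d) (Fin d) ℝ} (hM : M.IsHermitian) (t : ℝ) :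
    (M - t • 1).det = ∏ i, (hM.eigenvalues i - t) := by
  set V : Matrix (Fin d) (Fin d) ℝ := (hM.eigenvectorUnitary : Matrix (Fin d) (Fin d) ℝ) with hVdef
  have hV : V * star V = 1 := Matrix.mem_unitaryGroup_iff.mp hM.eigenvectorUnitary.2
  have hV' : star V * V = 1 := Matrix.mem_unitaryGroup_iff'.mp hM.eigenvectorUnitary.2
  have hVu : IsUnit V := ⟨⟨V, star V, hV, hV'⟩, rfl⟩
  have hVinv : star V = V⁻¹ := (Matrix.inv_eq_right_inv hV).symm
  have hdiag : Matrix.diagonal (RCLike.ofReal ∘ hM.eigenvalues) - t • (1 : Matrix (Fin d) (Fin d) ℝ)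
      = Matrix.diagonal (fun i => hM.eigenvalues i - t) := by
    rw [Matrix.smul_one_eq_diagonal, ← Matrix.diagonal_sub]
    congr 1
  have key : M - t • 1 = V * (Matrix.diagonal (fun i => hM.eigenvalues i - t)) * V⁻¹ := by
    rw [← hdiag, Matrix.mul_sub, Matrix.sub_mul, Matrix.mul_smul, Matrix.mul_one,
      Matrix.smul_mul, Matrix.mul_nonsing_inv _ (hVu.map Matrix.detMonoidHom)]
    conv_lhs => rw [hM.spectral_theorem]
    rw [Unitary.conjStarAlgAut_apply, ← hVdef, hVinv]
  rw [key, Matrix.det_conj hVu, Matrix.det_diagonal]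

lemma root_iff {d : ℕ} {M : Matrix (Fin d) (Fin d) ℝ} (hM : M.IsHermitian) (t : ℝ) :
    (M - t • 1).det = 0 ↔ ∃ i, hM.eigenvalues i = t := by
  rw [det_sub_smul_eq hM t, Finset.prod_eq_zero_iff]
  simp [sub_eq_zero]

lemma det_inv_rel {d : ℕ} (A : Matrix (Fin d) (Fin d) ℝ) (hA : A.det ≠ 0) {t : ℝ} (ht : t ≠ 0) :
    ((A⁻¹ᴴ * A⁻¹) - t • 1).det = 0 ↔ ((Aᴴ * A) - t⁻¹ • 1).det = 0 := by
  have hdetH : Aᴴ.det = A.det := by rw [Matrix.det_conjTranspose]; exact star_trivial _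
  have hP : (A * Aᴴ).det ≠ 0 := by rw [Matrix.det_mul, hdetH]; exact mul_ne_zero hA hA
  have hPu : IsUnit (A * Aᴴ).det := isUnit_iff_ne_zero.mpr hP
  have step1 : A⁻¹ᴴ * A⁻¹ = (A * Aᴴ)⁻¹ := by
    rw [Matrix.conjTranspose_nonsing_inv, ← Matrix.mul_inv_rev]
  have step2 : (A * Aᴴ)⁻¹ - t • 1 = (A * Aᴴ)⁻¹ * (1 - t • (A * Aᴴ)) := by
    rw [Matrix.mul_sub, Matrix.mul_one, Matrix.mul_smul, Matrix.nonsing_inv_mul _ hPu]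
  have hinv : (A * Aᴴ)⁻¹.det ≠ 0 := by
    have := Matrix.det_nonsing_inv (A * Aᴴ)
    rw [this, Ring.inverse_eq_inv]
    exact inv_ne_zero hP
  have h3 : (1 - t • (A * Aᴴ)).det = (1 - t • (Aᴴ * A)).det := by
    have e1 : (1 : Matrix (Fin d) (Fin d) ℝ) - t • (A * Aᴴ) = 1 + (t • A) * (-Aᴴ) := by
      rw [Matrix.mul_neg, Matrix.smul_mul, sub_eq_add_neg]
    have e2 : (1 : Matrix (Fin d) (Fin d) ℝ) - t • (Aᴴ * A) = 1 + (-Aᴴ) * (t • A) := by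
      rw [Matrix.neg_mul, Matrix.mul_smul, sub_eq_add_neg]
    rw [e1, e2, Matrix.det_one_add_mul_comm]
  have h4 : (1 : Matrix (Fin d) (Fin d) ℝ) - t • (Aᴴ * A) = (-t) • ((Aᴴ * A) - t⁻¹ • 1) := by
    rw [smul_sub, smul_smul, neg_mul, mul_inv_cancel₀ ht, neg_smul, neg_smul, sub_neg_eq_add,
      one_smul, neg_add_eq_sub]
  have h5 : ((-t) • ((Aᴴ * A) - t⁻¹ • 1)).det = (-t) ^ d * ((Aᴴ * A) - t⁻¹ • 1).det := by
    rw [Matrix.det_smul, Fintype.card_fin]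
  rw [step1, step2, Matrix.det_mul, h3, h4, h5]
  constructor
  · intro h
    rcases mul_eq_zero.mp h with h | h
    · exact absurd h hinv
    rcases mul_eq_zero.mp h with h | h
    · exact absurd h (pow_ne_zero _ (neg_ne_zero.mpr ht))
    exact h
  · intro h
    rw [h]; ring

lemma eig_pos' {d : ℕ} (A : Matrix (Fin d) (Fin d) ℝ) (hA : A.det ≠ 0) (i : Fin d) :
    0 < (Matrix.isHermitian_conjTranspose_mul_self A).eigenvalues i := by
  rcases ((Matrix.eigenvalues_conjTranspose_mul_self_nonneg A i).lt_or_eq) with h | h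
  · exact h
  exfalso
  have hdet : (Aᴴ * A).det ≠ 0 := by
    rw [Matrix.det_mul, Matrix.det_conjTranspose]
    exact mul_ne_zero (by simpa using hA) hA
  rw [(Matrix.isHermitian_conjTranspose_mul_self A).det_eq_prod_eigenvalues] at hdet
  exact hdet (Finset.prod_eq_zero (Finset.mem_univ i) (by simp; exact h.symm))

lemma eig_inv_mem {d : ℕ} (A : Matrix (Fin d) (Fin d) ℝ) (hA : A.det ≠ 0) :
    (∀ j, ∃ i, (Matrix.isHermitian_conjTranspose_mul_self A⁻¹).eigenvalues j
        = ((Matrix.isHermitian_conjTranspose_mul_self A).eigenvalues i)⁻¹) ∧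
    (∀ i, ∃ j, (Matrix.isHermitian_conjTranspose_mul_self A⁻¹).eigenvalues j
        = ((Matrix.isHermitian_conjTranspose_mul_self A).eigenvalues i)⁻¹) := by
  have hAinv : (A⁻¹).det ≠ 0 := by
    rw [Matrix.det_nonsing_inv, Ring.inverse_eq_inv]; exact inv_ne_zero hA
  constructor
  · intro j
    have hνj := eig_pos' A⁻¹ hAinv j
    have hroot : ((A⁻¹ᴴ * A⁻¹) - ((Matrix.isHermitian_conjTranspose_mul_self A⁻¹).eigenvalues j) • 1).det = 0 :=
      (root_iff (Matrix.isHermitian_conjTranspose_mul_self A⁻¹) _).mpr ⟨j, rfl⟩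
    rw [det_inv_rel A hA hνj.ne'] at hroot
    obtain ⟨i, hi⟩ := (root_iff (Matrix.isHermitian_conjTranspose_mul_self A) _).mp hroot
    refine ⟨i, ?_⟩
    rw [hi, inv_inv]
  · intro i
    have hμi := eig_pos' A hA i
    have hroot : ((Aᴴ * A) - ((Matrix.isHermitian_conjTranspose_mul_self A).eigenvalues i) • 1).det = 0 :=
      (root_iff (Matrix.isHermitian_conjTranspose_mul_self A) _).mpr ⟨i, rfl⟩
    have := (det_inv_rel A hA (t := ((Matrix.isHermitian_conjTranspose_mul_self A).eigenvalues i)⁻¹)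
      (inv_ne_zero hμi.ne')).mpr (by rwa [inv_inv])
    obtain ⟨j, hj⟩ := (root_iff (Matrix.isHermitian_conjTranspose_mul_self A⁻¹) _).mp this
    exact ⟨j, hj⟩

lemma trace_eq_sum_eig {d : ℕ} {M : Matrix (Fin d) (Fin d) ℝ} (hM : M.IsHermitian) :
    M.trace = ∑ i, hM.eigenvalues i := by
  set V : Matrix (Fin d) (Fin d) ℝ := (hM.eigenvectorUnitary : Matrix (Fin d) (Fin d) ℝ) with hVdef
  have hV : V * star V = 1 := Matrix.mem_unitaryGroup_iff.mp hM.eigenvectorUnitary.2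
  have hV' : star V * V = 1 := Matrix.mem_unitaryGroup_iff'.mp hM.eigenvectorUnitary.2
  have hVu : IsUnit V := ⟨⟨V, star V, hV, hV'⟩, rfl⟩
  have hVinv : star V = V⁻¹ := (Matrix.inv_eq_right_inv hV).symm
  conv_lhs => rw [hM.spectral_theorem]
  rw [Unitary.conjStarAlgAut_apply, ← hVdef, hVinv, Matrix.trace_conj hVu, Matrix.trace_diagonal]
  simp

lemma geo_mean_le {f : ℕ → ℝ} {n k : ℕ} (hk : 1 ≤ k) (hkn : k ≤ n)
    (hpos : ∀ i < n, 0 < f i) (hmono : ∀ i j, i ≤ j → j < n → f j ≤ f i) :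
    ∏ i ∈ Finset.range n, f i ≤ (∏ i ∈ Finset.range k, f i) ^ ((n : ℝ) / k) := by
  have hk0 : (k : ℝ) ≠ 0 := Nat.cast_ne_zero.mpr (by omega)
  set p := ∏ i ∈ Finset.range k, f i with hpdef
  have hp : 0 < p := Finset.prod_pos fun i hi => hpos i (lt_of_lt_of_le (Finset.mem_range.mp hi) hkn)
  set a := f (k - 1) with hadef
  have hk1n : k - 1 < n := by omega
  have ha : 0 < a := hpos _ hk1n
  have hak : a ^ k ≤ p := by
    calc a ^ k = ∏ _i ∈ Finset.range k, a := by rw [Finset.prod_const, Finset.card_range]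
    _ ≤ p := Finset.prod_le_prod (fun i _ => ha.le)
        (fun i hi => hmono i (k - 1) (by have := Finset.mem_range.mp hi; omega) hk1n)
  have hap : a ≤ p ^ ((k : ℝ)⁻¹) := by
    have h := Real.rpow_le_rpow (by positivity) hak (by positivity : (0:ℝ) ≤ (k:ℝ)⁻¹)
    rwa [← Real.rpow_natCast a k, ← Real.rpow_mul ha.le, mul_inv_cancel₀ hk0,
      Real.rpow_one] at h
  have hq : ∏ i ∈ Finset.Ico k n, f i ≤ (p ^ ((k : ℝ)⁻¹)) ^ (n - k) := by
    calc ∏ i ∈ Finset.Ico k n, f i ≤ ∏ _i ∈ Finset.Ico k n, a :=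
          Finset.prod_le_prod (fun i hi => (hpos i (Finset.mem_Ico.mp hi).2).le)
            (fun i hi => hmono (k - 1) i (le_trans (Nat.sub_le k 1) (Finset.mem_Ico.mp hi).1) (Finset.mem_Ico.mp hi).2)
    _ = a ^ (n - k) := by rw [Finset.prod_const, Nat.card_Ico]
    _ ≤ (p ^ ((k : ℝ)⁻¹)) ^ (n - k) := pow_le_pow_left₀ ha.le hap _
  calc ∏ i ∈ Finset.range n, f i = p * ∏ i ∈ Finset.Ico k n, f i := by
        rw [Finset.prod_range_mul_prod_Ico f hkn]
  _ ≤ p * (p ^ ((k : ℝ)⁻¹)) ^ (n - k) := mul_le_mul_of_nonneg_left hq hp.le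
  _ = p ^ ((n : ℝ) / k) := by
      rw [← Real.rpow_natCast (p ^ ((k:ℝ)⁻¹)) (n - k), ← Real.rpow_mul hp.le]
      have hexp : (n : ℝ) / k = 1 + (k : ℝ)⁻¹ * ((n - k : ℕ) : ℝ) := by
        push_cast [Nat.cast_sub hkn]
        field_simp
        ring
      rw [hexp, Real.rpow_add hp, Real.rpow_one]

lemma key_bound {d : ℕ} (hd : 0 < d)
    (σ : Matrix (Fin d) (Fin d) ℝ → Fin d → ℝ)
    (hσ_mono : ∀ A : Matrix (Fin d) (Fin d) ℝ, ∀ i j : Fin d, i ≤ j → σ A j ≤ σ A i)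
    (hσ_eig : ∀ A : Matrix (Fin d) (Fin d) ℝ, ∃ e : Fin d ≃ Fin d, ∀ i,
      σ A i = Real.sqrt ((Matrix.isHermitian_conjTranspose_mul_self A).eigenvalues (e i)))
    {k : ℕ} (hk1 : 1 ≤ k) (hk2 : k ≤ d - 1) {K : ℝ} (hK : 0 < K)
    (A : Matrix (Fin d) (Fin d) ℝ) (hdetA : A.det ≠ 0) (hdetB : |(A⁻¹).det| = 1)
    (hbd : (∏ i ∈ Finset.range k, if h : i < d then σ A⁻¹ ⟨i, h⟩ else 1) ≤ K) :
    σ A ⟨0, hd⟩ ≤ K ^ ((d - 1 : ℝ) / k) := by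
  have hd2 : 2 ≤ d := by omega
  obtain ⟨mem1, mem2⟩ := eig_inv_mem A hdetA
  have hdetAinv : (A⁻¹).det ≠ 0 := fun h => by simp [h] at hdetB
  have μpos := eig_pos' A hdetA
  have νpos := eig_pos' A⁻¹ hdetAinv
  obtain ⟨eA, heA⟩ := hσ_eig A
  obtain ⟨eB, heB⟩ := hσ_eig A⁻¹
  have hdet1 := (Matrix.isHermitian_conjTranspose_mul_self A⁻¹).det_eq_prod_eigenvalues
  set μ := (Matrix.isHermitian_conjTranspose_mul_self A).eigenvalues with hμdef
  set ν := (Matrix.isHermitian_conjTranspose_mul_self A⁻¹).eigenvalues with hνdef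
  set i0 : Fin d := ⟨0, hd⟩ with hi0
  set iL : Fin d := ⟨d - 1, by omega⟩ with hiL
  have μmax : ∀ j, μ j ≤ μ (eA i0) := by
    intro j
    have h1 : σ A (eA.symm j) ≤ σ A i0 := hσ_mono A i0 (eA.symm j) (by simp [Fin.le_def, hi0])
    rw [heA, heA, Equiv.apply_symm_apply] at h1
    exact (Real.sqrt_le_sqrt_iff (μpos (eA i0)).le).mp h1
  have νmin : ∀ j, ν (eB iL) ≤ ν j := by
    intro j
    have h1 : σ A⁻¹ iL ≤ σ A⁻¹ (eB.symm j) := by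
      refine hσ_mono A⁻¹ (eB.symm j) iL ?_
      simp only [Fin.le_def, hiL]
      omega
    rw [heB, heB, Equiv.apply_symm_apply] at h1
    exact (Real.sqrt_le_sqrt_iff (νpos j).le).mp h1
  have beq : ν (eB iL) = (μ (eA i0))⁻¹ := by
    obtain ⟨i, hi⟩ := mem1 (eB iL)
    obtain ⟨j, hj⟩ := mem2 (eA i0)
    refine le_antisymm (hj ▸ νmin j) ?_
    rw [hi]
    exact inv_anti₀ (μpos i) (μmax i)
  have prod1 : σ A i0 * σ A⁻¹ iL = 1 := by
    rw [heA, heB, beq, ← Real.sqrt_mul (μpos (eA i0)).le,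
      mul_inv_cancel₀ (μpos (eA i0)).ne', Real.sqrt_one]
  have sBpos : ∀ i, 0 < σ A⁻¹ i := fun i => by
    rw [heB]; exact Real.sqrt_pos.mpr (νpos _)
  have prodν : ∏ i, σ A⁻¹ i = 1 := by
    have hsq : (∏ i, σ A⁻¹ i) ^ 2 = ∏ j, ν j := by
      rw [← Finset.prod_pow]
      rw [← Equiv.prod_comp eB ν]
      exact Finset.prod_congr rfl fun i _ => by rw [heB, Real.sq_sqrt (νpos (eB i)).le]
    have hdet : ∏ j, ν j = 1 := by
      have h2 : (A⁻¹ᴴ * A⁻¹).det = 1 := by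
        rw [Matrix.det_mul, Matrix.det_conjTranspose, star_trivial, ← sq, ← sq_abs, hdetB,
          one_pow]
      rw [h2] at hdet1
      simpa using hdet1.symm
    rw [hdet] at hsq
    have hnn : 0 ≤ ∏ i, σ A⁻¹ i := Finset.prod_nonneg fun i _ => (sBpos i).le
    nlinarith [hsq, hnn]
  set f : ℕ → ℝ := fun i => if h : i < d then σ A⁻¹ ⟨i, h⟩ else 1 with hf
  have hfval : ∀ i : Fin d, f i = σ A⁻¹ i := fun i => by simp [hf]
  have ftotal : ∏ i ∈ Finset.range d, f i = 1 := by
    rw [← Fin.prod_univ_eq_prod_range f d, Finset.prod_congr rfl fun i _ => hfval i, prodν]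
  have fsplit : (∏ i ∈ Finset.range (d - 1), f i) * f (d - 1) = 1 := by
    have h := Finset.prod_range_succ f (d - 1)
    rw [show d - 1 + 1 = d by omega] at h
    rw [← h, ftotal]
  have hfd1 : f (d - 1) = σ A⁻¹ iL := by
    rw [hf]; simp only [dif_pos (show d - 1 < d by omega)]; rfl
  have hA0 : σ A i0 = ∏ i ∈ Finset.range (d - 1), f i := by
    apply mul_right_cancel₀ (sBpos iL).ne'
    rw [prod1, ← hfd1, fsplit]
  rw [hA0]
  have geo := geo_mean_le (f := f) hk1 hk2
    (fun i hi => by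
      rw [hf]; simp only [dif_pos (show i < d by omega)]; exact sBpos _)
    (fun i j hij hj => by
      rw [hf]
      simp only [dif_pos (show i < d by omega), dif_pos (show j < d by omega)]
      exact hσ_mono A⁻¹ ⟨i, by omega⟩ ⟨j, by omega⟩ (by simpa [Fin.le_def] using hij))
  refine le_trans geo ?_
  have hcast : (((d - 1 : ℕ) : ℝ)) = (d : ℝ) - 1 := by
    push_cast [Nat.cast_sub hd]
    ring
  rw [hcast] at geo ⊢
  have hfnn : ∀ i, 0 ≤ f i := fun i => by
    rw [hf]
    by_cases h : i < d
    · simp only [dif_pos h]; exact (sBpos _).le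
    · simp only [dif_neg h]; exact zero_le_one
  exact Real.rpow_le_rpow (Finset.prod_nonneg fun i _ => hfnn i) hbd
    (div_nonneg (sub_nonneg.mpr (by exact_mod_cast hd)) (Nat.cast_nonneg k))

lemma entry_bound {d : ℕ} (A : Matrix (Fin d) (Fin d) ℝ) {t : ℝ}
    (hμ : ∀ j, (Matrix.isHermitian_conjTranspose_mul_self A).eigenvalues j ≤ t) (i j : Fin d) :
    |A i j| ≤ Real.sqrt ((d : ℝ) * t) := by
  have hdiag : ∀ l, 0 ≤ (Aᴴ * A) l l := fun l => by
    rw [Matrix.mul_apply]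
    exact Finset.sum_nonneg fun m _ => by
      rw [Matrix.conjTranspose_apply, star_trivial]
      exact mul_self_nonneg _
  have h2 : (A i j) ^ 2 ≤ (Aᴴ * A) j j := by
    rw [Matrix.mul_apply]
    have := Finset.single_le_sum (f := fun m => Aᴴ j m * A m j)
      (fun m _ => by
        simp only [Matrix.conjTranspose_apply, star_trivial]; exact mul_self_nonneg _)
      (Finset.mem_univ i)
    simp only [Matrix.conjTranspose_apply, star_trivial] at this
    calc (A i j) ^ 2 = A i j * A i j := sq (A i j)
    _ ≤ _ := this
  have h3 : (Aᴴ * A) j j ≤ (Aᴴ * A).trace := by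
    rw [Matrix.trace]
    exact Finset.single_le_sum (f := fun l => (Aᴴ * A).diag l)
      (fun l _ => hdiag l) (Finset.mem_univ j)
  have h4 : (Aᴴ * A).trace ≤ (d : ℝ) * t := by
    rw [trace_eq_sum_eig (Matrix.isHermitian_conjTranspose_mul_self A)]
    calc ∑ l, (Matrix.isHermitian_conjTranspose_mul_self A).eigenvalues l
        ≤ ∑ _l : Fin d, t := Finset.sum_le_sum fun l _ => hμ l
    _ = (d : ℝ) * t := by simp [Finset.sum_const, nsmul_eq_mul]
  have h5 : (A i j) ^ 2 ≤ (d : ℝ) * t := le_trans h2 (le_trans h3 h4)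
  calc |A i j| = Real.sqrt ((A i j) ^ 2) := (Real.sqrt_sq_eq_abs _).symm
  _ ≤ Real.sqrt ((d : ℝ) * t) := Real.sqrt_le_sqrt h5

lemma det_normalized {d : ℕ} (hd : 0 < d) (u : Matrix.GeneralLinearGroup (Fin d) ℝ) :
    |((|(↑u : Matrix (Fin d) (Fin d) ℝ).det| ^ (-(1 : ℝ) / d)) •
      (↑u : Matrix (Fin d) (Fin d) ℝ)).det| = 1 := by
  have hdet0 : (↑u : Matrix (Fin d) (Fin d) ℝ).det ≠ 0 :=
    ((Matrix.isUnit_iff_isUnit_det _).mp u.isUnit).ne_zero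
  set x := |(↑u : Matrix (Fin d) (Fin d) ℝ).det| with hx
  have hxpos : 0 < x := abs_pos.mpr hdet0
  have hc : (0:ℝ) < x ^ (-(1 : ℝ) / d) := Real.rpow_pos_of_pos hxpos _
  rw [Matrix.det_smul, Fintype.card_fin]
  have hcd : (x ^ (-(1 : ℝ) / d)) ^ d = x⁻¹ := by
    rw [← Real.rpow_natCast (x ^ (-(1 : ℝ) / d)) d, ← Real.rpow_mul hxpos.le]
    have : (-(1 : ℝ) / d) * d = -1 := by
      field_simp
    rw [this, Real.rpow_neg_one]
  rw [abs_mul, hcd, abs_inv, abs_abs, ← hx]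
  exact inv_mul_cancel₀ hxpos.ne'

lemma inv_normalized {d : ℕ} (hd : 0 < d) (u : Matrix.GeneralLinearGroup (Fin d) ℝ) :
    (|(↑(u⁻¹) : Matrix (Fin d) (Fin d) ℝ).det| ^ (-(1 : ℝ) / d)) •
      (↑(u⁻¹) : Matrix (Fin d) (Fin d) ℝ) =
    ((|(↑u : Matrix (Fin d) (Fin d) ℝ).det| ^ (-(1 : ℝ) / d)) •
      (↑u : Matrix (Fin d) (Fin d) ℝ))⁻¹ := by
  have hdet0 : (↑u : Matrix (Fin d) (Fin d) ℝ).det ≠ 0 :=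
    ((Matrix.isUnit_iff_isUnit_det _).mp u.isUnit).ne_zero
  set x := |(↑u : Matrix (Fin d) (Fin d) ℝ).det| with hx
  have hxpos : 0 < x := abs_pos.mpr hdet0
  have hc : (0:ℝ) < x ^ (-(1 : ℝ) / d) := Real.rpow_pos_of_pos hxpos _
  have hcoe : (↑(u⁻¹) : Matrix (Fin d) (Fin d) ℝ) = (↑u : Matrix (Fin d) (Fin d) ℝ)⁻¹ :=
    Matrix.coe_units_inv u
  have hdetinv : (↑(u⁻¹) : Matrix (Fin d) (Fin d) ℝ).det =
      ((↑u : Matrix (Fin d) (Fin d) ℝ).det)⁻¹ := by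
    rw [hcoe, Matrix.det_nonsing_inv, Ring.inverse_eq_inv]
  have hco : |(↑(u⁻¹) : Matrix (Fin d) (Fin d) ℝ).det| ^ (-(1 : ℝ) / d) =
      (x ^ (-(1 : ℝ) / d))⁻¹ := by
    rw [hdetinv, abs_inv, ← hx, ← Real.inv_rpow (abs_nonneg _)]
  rw [hco, hcoe]
  symm
  apply Matrix.inv_eq_right_inv
  rw [Matrix.smul_mul, Matrix.mul_smul, smul_smul,
    Matrix.mul_nonsing_inv _ (isUnit_iff_ne_zero.mpr hdet0),
    mul_inv_cancel₀ hc.ne', one_smul]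

/-- if `G ≤ GL_d(ℝ)` and for every `g ∈ G` the product of the `k`
largest singular values of `h := |det g|^{-1/d} g` (i.e. `‖h^{∧k}‖`) is at most `K`,
with `1 ≤ k ≤ d-1`, then `‖h‖ = σ₁(h) ≤ K^{(d-1)/k}` and `‖h⁻¹‖ ≤ K^{(d-1)/k}` for
every `g ∈ G`; consequently `{|det g|^{-1/d} g : g ∈ G}` is contained in a compact
subset of `GL_d(ℝ)`.  Here `σ A` lists the singular values of `A` in decreasing
order. -/
theorem stmt8 {d : ℕ} (hd : 0 < d)
    (σ : Matrix (Fin d) (Fin d) ℝ → Fin d → ℝ)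
    (hσ_mono : ∀ A : Matrix (Fin d) (Fin d) ℝ, ∀ i j : Fin d, i ≤ j → σ A j ≤ σ A i)
    (hσ_eig : ∀ A : Matrix (Fin d) (Fin d) ℝ, ∃ e : Fin d ≃ Fin d, ∀ i,
      σ A i = Real.sqrt ((show (Aᵀ * A).IsHermitian from
        Matrix.isHermitian_iff_isSymm.mpr (Matrix.isSymm_transpose_mul_self A)).eigenvalues (e i)))
    (G : Subgroup (Matrix.GeneralLinearGroup (Fin d) ℝ))
    (k : ℕ) (hk1 : 1 ≤ k) (hk2 : k ≤ d - 1)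
    (K : ℝ) (hK : 0 < K)
    (hbound : ∀ g ∈ G,
      (∏ i ∈ Finset.range k, if h : i < d then
        σ (|(↑g : Matrix (Fin d) (Fin d) ℝ).det| ^ (-(1 : ℝ) / d) •
            (↑g : Matrix (Fin d) (Fin d) ℝ)) ⟨i, h⟩ else 1) ≤ K) :
    (∀ g ∈ G,
      σ (|(↑g : Matrix (Fin d) (Fin d) ℝ).det| ^ (-(1 : ℝ) / d) •
          (↑g : Matrix (Fin d) (Fin d) ℝ)) ⟨0, hd⟩ ≤ K ^ ((d - 1 : ℝ) / k) ∧
      σ (|(↑(g⁻¹) : Matrix (Fin d) (Fin d) ℝ).det| ^ (-(1 : ℝ) / d) •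
          (↑(g⁻¹) : Matrix (Fin d) (Fin d) ℝ)) ⟨0, hd⟩ ≤ K ^ ((d - 1 : ℝ) / k)) ∧
    ∃ C : Set (Matrix (Fin d) (Fin d) ℝ), IsCompact C ∧ (∀ M ∈ C, IsUnit M.det) ∧
      ∀ g ∈ G, |(↑g : Matrix (Fin d) (Fin d) ℝ).det| ^ (-(1 : ℝ) / d) •
        (↑g : Matrix (Fin d) (Fin d) ℝ) ∈ C := by
  have key : ∀ g ∈ G,
      σ (|(↑g : Matrix (Fin d) (Fin d) ℝ).det| ^ (-(1 : ℝ) / d) •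
          (↑g : Matrix (Fin d) (Fin d) ℝ)) ⟨0, hd⟩ ≤ K ^ ((d - 1 : ℝ) / k) := by
    intro g hg
    have hdetA : ((|(↑g : Matrix (Fin d) (Fin d) ℝ).det| ^ (-(1 : ℝ) / d)) •
        (↑g : Matrix (Fin d) (Fin d) ℝ)).det ≠ 0 := by
      have h1 := det_normalized hd g
      intro h
      rw [h] at h1
      simp at h1
    have hinv := inv_normalized hd g
    have hdetB := det_normalized hd g⁻¹
    rw [hinv] at hdetB
    have hbd := hbound g⁻¹ (G.inv_mem hg)
    rw [hinv] at hbd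
    exact key_bound hd σ hσ_mono hσ_eig hk1 hk2 hK _ hdetA hdetB hbd
  refine ⟨fun g hg => ⟨key g hg, key g⁻¹ (G.inv_mem hg)⟩, ?_⟩
  set Bd := K ^ ((d - 1 : ℝ) / k) with hBd
  have hBdpos : 0 < Bd := Real.rpow_pos_of_pos hK _
  set c := Real.sqrt ((d : ℝ) * Bd ^ 2) with hc
  refine ⟨{M : Matrix (Fin d) (Fin d) ℝ | |M.det| = 1 ∧ ∀ i j, |M i j| ≤ c}, ?_, ?_, ?_⟩
  · have hclosed : IsClosed {M : Matrix (Fin d) (Fin d) ℝ | |M.det| = 1 ∧ ∀ i j, |M i j| ≤ c} := by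
      rw [Set.setOf_and]
      apply IsClosed.inter
      · exact isClosed_eq (Continuous.abs (continuous_id.matrix_det)) continuous_const
      · have : {M : Matrix (Fin d) (Fin d) ℝ | ∀ i j, |M i j| ≤ c}
            = ⋂ i, ⋂ j, {M : Matrix (Fin d) (Fin d) ℝ | |M i j| ≤ c} := by
          ext M; simp
        rw [this]
        exact isClosed_iInter fun i => isClosed_iInter fun j =>
          isClosed_le (Continuous.abs ((continuous_apply j).comp (continuous_apply i)))
            continuous_const
    have hS : IsCompact ((Set.univ.pi fun _ : Fin d => Set.univ.pi fun _ : Fin d =>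
        Set.Icc (-c) c) : Set (Matrix (Fin d) (Fin d) ℝ)) :=
      isCompact_univ_pi fun _ => isCompact_univ_pi fun _ => isCompact_Icc
    apply IsCompact.of_isClosed_subset hS hclosed
    intro M hM
    rw [Set.mem_pi]
    intro i _
    rw [Set.mem_pi]
    intro j _
    exact abs_le.mp (hM.2 i j)
  · intro M hM
    refine isUnit_iff_ne_zero.mpr fun h => ?_
    have := hM.1
    rw [h] at this
    simp at this
  · intro g hg
    refine ⟨det_normalized hd g, fun i j => ?_⟩
    set A := (|(↑g : Matrix (Fin d) (Fin d) ℝ).det| ^ (-(1 : ℝ) / d)) •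
        (↑g : Matrix (Fin d) (Fin d) ℝ) with hA
    obtain ⟨eA, heA⟩ := hσ_eig A
    have hs0 := key g hg
    rw [← hA] at hs0
    have hμt : ∀ l, (Matrix.isHermitian_conjTranspose_mul_self A).eigenvalues l ≤ Bd ^ 2 := by
      intro l
      have h1 : σ A (eA.symm l) ≤ σ A ⟨0, hd⟩ :=
        hσ_mono A ⟨0, hd⟩ (eA.symm l) (by simp [Fin.le_def])
      rw [heA, Equiv.apply_symm_apply] at h1
      have h2 : Real.sqrt ((Matrix.isHermitian_conjTranspose_mul_self A).eigenvalues l) ≤ Bd :=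
        le_trans h1 hs0
      calc (Matrix.isHermitian_conjTranspose_mul_self A).eigenvalues l
          = (Real.sqrt ((Matrix.isHermitian_conjTranspose_mul_self A).eigenvalues l)) ^ 2 :=
            (Real.sq_sqrt (Matrix.eigenvalues_conjTranspose_mul_self_nonneg A l)).symm
      _ ≤ Bd ^ 2 := pow_le_pow_left₀ (Real.sqrt_nonneg _) h2 2
    exact entry_bound A hμt i j
end

section
/- Let G be a group acting linearly on a finite-dimensional real vector space V, let X₁,…,X_p be subspaces forming a direct sum decomposition V = X₁ ⊕ ⋯ ⊕ X_p which is transitively permuted by the G-action, and suppose a normal subgroup G⁰ of finite index preserves each Xᵢ. Then all Xᵢ have equal dimension d/p (where d = dim V), and for each g ∈ G⁰ and each i, the set {[h] ∈ G/G⁰ : h·Xᵢ = X_j} as j ranges over 1,…,p forms a partition of G/G⁰ into cosets of equal cardinality |G/G⁰|/p; consequently if g ∈ G⁰ acts on each Xᵢ by a scalar γᵢ(g), then ∏_{[h]∈G/G⁰} |γᵢ(hgh^{-1})| = |det g|^{|G/G⁰|/d} for each i. -/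
/-!
The group `G ⧸ G₀` acts on the subspaces fixed by `G₀`, and the `Xᵢ` form a single orbit of
size `p` of this action. Transitivity makes all `Xᵢ` isomorphic, so `dim Xᵢ = d / p`, and
orbit–stabilizer shows that each set `{[h] : h • Xᵢ = Xⱼ}` is a coset of the stabilizer of `Xᵢ`,
of size `|G ⧸ G₀| / p`. For `g ∈ G₀`, the scalar of `hgh⁻¹` on `Xᵢ` is the scalar of `g` on
`h⁻¹ • Xᵢ`; hence the product over `G ⧸ G₀` is `∏ⱼ |γⱼ(g)| ^ (|G ⧸ G₀| / p)`, while
`det g = ∏ⱼ γⱼ(g) ^ (d / p)`.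
-/

open Module MulAction

namespace DirectSum

variable {ι R M : Type*} [Ring R] [AddCommGroup M] [Module R M] {N : ι → Submodule R M}

theorem isInternal_of_iSup_eq_top_of_disjoint [DecidableEq ι] (hsup : ⨆ i, N i = ⊤)
    (hdisj : ∀ i, Disjoint (N i) (⨆ j ∈ ({i}ᶜ : Set ι), N j)) : IsInternal N := by
  refine isInternal_submodule_of_iSupIndep_of_iSup_eq_top (iSupIndep_def.mpr fun i => ?_) hsup
  simpa only [Set.mem_compl_singleton_iff] using hdisj i

end DirectSum

section IsInternal

variable {ι K M : Type*} [Field K] [AddCommGroup M] [Module K M] [Fintype ι] [DecidableEq ι]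
  {N : ι → Submodule K M} [∀ i, FiniteDimensional K (N i)]

theorem DirectSum.IsInternal.finrank_eq_sum (h : DirectSum.IsInternal N) :
    finrank K M = ∑ i, finrank K (N i) := by
  rw [finrank_eq_card_basis (h.collectedBasis fun i => Module.finBasis K (N i)),
    Fintype.card_sigma]
  simp

theorem LinearMap.det_eq_prod_pow_finrank_of_isInternal (h : DirectSum.IsInternal N)
    {f : M →ₗ[K] M} {c : ι → K} (hf : ∀ i, ∀ v ∈ N i, f v = c i • v) :
    LinearMap.det f = ∏ i, c i ^ finrank K (N i) := by
  let B := h.collectedBasis fun i => Module.finBasis K (N i)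
  have hdiag : LinearMap.toMatrix B B f = Matrix.diagonal fun k => c k.1 := by
    ext k l
    rw [LinearMap.toMatrix_apply, hf l.1 _ (h.collectedBasis_mem _ l), map_smul, B.repr_self,
      Finsupp.smul_single, smul_eq_mul, mul_one, Finsupp.single_apply, Matrix.diagonal_apply]
    by_cases hkl : k = l
    · simp [hkl]
    · simp [hkl, Ne.symm hkl]
  rw [← LinearMap.det_toMatrix B, hdiag, Matrix.det_diagonal, ← Finset.univ_sigma_univ,
    Finset.prod_sigma]
  simp

end IsInternal

namespace MulAction

variable {Q α : Type*} [Group Q] [MulAction Q α]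

theorem card_smul_eq_eq_card_stabilizer {a b : α} (hb : b ∈ orbit Q a) :
    Nat.card {q : Q // q • a = b} = Nat.card (stabilizer Q a) := by
  obtain ⟨q₀, rfl⟩ := hb
  refine Nat.card_congr ((Equiv.mulLeft q₀⁻¹).subtypeEquiv fun q => ?_)
  simp [mem_stabilizer_iff, mul_smul, inv_smul_eq_iff]

theorem card_stabilizer_mul_card_orbit [Finite Q] (a : α) :
    Nat.card (stabilizer Q a) * Nat.card (orbit Q a) = Nat.card Q := by
  rw [Nat.card_coe_set_eq, ← index_stabilizer, Subgroup.card_mul_index]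

theorem finprod_smul_eq_finprod_orbit_pow {M : Type*} [CommMonoid M] [Finite Q] (f : α → M)
    (a : α) : ∏ᶠ q : Q, f (q • a) = ∏ᶠ b ∈ orbit Q a, f b ^ Nat.card (stabilizer Q a) := by
  classical
  have : Fintype Q := Fintype.ofFinite Q
  have : Fintype (orbit Q a) := (Set.finite_range fun q : Q => q • a).fintype
  rw [← finprod_set_coe_eq_finprod_mem, finprod_eq_prod_of_fintype, finprod_eq_prod_of_fintype,
    ← Finset.prod_fiberwise Finset.univ fun q : Q => (⟨q • a, mem_orbit a q⟩ : orbit Q a)]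
  refine Finset.prod_congr rfl fun b _ => ?_
  rw [← card_smul_eq_eq_card_stabilizer b.2, Nat.card_eq_fintype_card, Fintype.card_subtype,
    Finset.prod_congr rfl fun q hq =>
      congrArg f (congrArg Subtype.val (Finset.mem_filter.mp hq).2),
    Finset.prod_const]
  simp only [Subtype.ext_iff]

section FixedFamily

variable {G A ι : Type*} [Group G] [MulAction G A] {G₀ : Subgroup G} [G₀.Normal]
  {y : ι → fixedPoints G₀ A}

theorem out_smul_coe_eq_iff (q : G ⧸ G₀) (a b : fixedPoints G₀ A) :
    q.out • (a : A) = b ↔ q • a = b := by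
  rw [← quotient_out_smul_fixedPoints, Subtype.ext_iff]
  rfl

theorem orbit_quotient_eq_range (hperm : ∀ (g : G) i, ∃ j, g • (y i : A) = y j)
    (htrans : ∀ i j, ∃ g : G, g • (y i : A) = y j) (i : ι) :
    orbit (G ⧸ G₀) (y i) = Set.range y := by
  ext b
  constructor
  · rintro ⟨q, rfl⟩
    obtain ⟨j, hj⟩ := hperm q.out i
    exact ⟨j, ((out_smul_coe_eq_iff q _ _).mp hj).symm⟩
  · rintro ⟨j, rfl⟩
    obtain ⟨g, hg⟩ := htrans i j
    exact ⟨g, Subtype.ext hg⟩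

theorem card_out_smul_eq_card_stabilizer (i j : ι) (hj : y j ∈ orbit (G ⧸ G₀) (y i)) :
    Nat.card {q : G ⧸ G₀ // q.out • (y i : A) = y j} = Nat.card (stabilizer (G ⧸ G₀) (y i)) := by
  rw [← card_smul_eq_eq_card_stabilizer hj]
  exact Nat.card_congr (Equiv.subtypeEquivRight fun q => out_smul_coe_eq_iff q _ _)

variable [Finite (G ⧸ G₀)]

theorem card_out_smul_mul_card_eq [Finite ι] (hperm : ∀ (g : G) i, ∃ j, g • (y i : A) = y j)
    (htrans : ∀ i j, ∃ g : G, g • (y i : A) = y j) (hy : Function.Injective y) (i j : ι) :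
    Nat.card {q : G ⧸ G₀ // q.out • (y i : A) = y j} * Nat.card ι = Nat.card (G ⧸ G₀) := by
  have horbit := orbit_quotient_eq_range hperm htrans i
  rw [card_out_smul_eq_card_stabilizer i j (horbit ▸ Set.mem_range_self j),
    ← card_stabilizer_mul_card_orbit (Q := G ⧸ G₀) (y i), horbit, Nat.card_range_of_injective hy]

theorem finprod_eq_prod_pow_of_out_smul [Fintype ι] {M : Type*} [CommMonoid M]
    (hperm : ∀ (g : G) i, ∃ j, g • (y i : A) = y j)
    (htrans : ∀ i j, ∃ g : G, g • (y i : A) = y j) (hy : Function.Injective y) (i : ι)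
    {F : G ⧸ G₀ → M} {f : ι → M} (hF : ∀ q j, q.out • (y j : A) = y i → F q = f j) :
    ∏ᶠ q, F q = (∏ j, f j) ^ Nat.card {q : G ⧸ G₀ // q.out • (y i : A) = y i} := by
  have horbit := orbit_quotient_eq_range hperm htrans i
  have hFq : ∀ q : G ⧸ G₀, F q = Function.extend y f 1 (q⁻¹ • y i) := fun q => by
    obtain ⟨j, hj⟩ : q⁻¹ • y i ∈ Set.range y := horbit ▸ mem_orbit _ _
    rw [← hj, hy.extend_apply]
    exact hF q j ((out_smul_coe_eq_iff q _ _).mpr (by rw [hj, smul_inv_smul]))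
  have hinv : ∏ᶠ q, F q = ∏ᶠ q : G ⧸ G₀, Function.extend y f 1 (q • y i) :=
    (finprod_congr hFq).trans <|
      finprod_comp_equiv (Equiv.inv _) (f := fun q => Function.extend y f 1 (q • y i))
  rw [hinv, finprod_smul_eq_finprod_orbit_pow, horbit, finprod_mem_range hy,
    card_out_smul_eq_card_stabilizer i i (mem_orbit_self _), finprod_eq_prod_of_fintype,
    Finset.prod_pow]
  simp only [hy.extend_apply]

end FixedFamily

end MulAction

namespace Representation

variable {k G V : Type*} [CommRing k] [Group G] [AddCommGroup V] [Module k V]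
  (ρ : Representation k G V)

abbrev submoduleAction : MulAction G (Submodule k V) where
  smul g W := W.map (ρ g)
  one_smul W := by
    change W.map (ρ 1) = W
    rw [map_one, Module.End.one_eq_id, Submodule.map_id]
  mul_smul a b W := by
    change W.map (ρ (a * b)) = (W.map (ρ b)).map (ρ a)
    rw [map_mul, Module.End.mul_eq_comp, Submodule.map_comp]

theorem finrank_map (g : G) (W : Submodule k V) : finrank k (W.map (ρ g)) = finrank k W :=
  (Submodule.equivMapOfInjective _ (ρ.apply_bijective g).injective W).finrank_eq.symm

theorem eq_of_apply_eq_smul_of_conj_apply_eq_smul [IsDomain k] [Module.IsTorsionFree k V]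
    {W : Submodule k V} (hW : W ≠ ⊥) {g h : G} {c c' : k} (hg : ∀ v ∈ W, ρ g v = c • v)
    (hc' : ∀ v ∈ W.map (ρ h), ρ (h * g * h⁻¹) v = c' • v) : c' = c := by
  obtain ⟨w, hw, hw0⟩ := Submodule.exists_mem_ne_zero_of_ne_bot hW
  have hhw : ρ h w ≠ 0 := by
    rwa [Ne, ← map_zero (ρ h), (ρ.apply_bijective h).injective.eq_iff]
  refine smul_left_injective k hhw ((hc' _ (Submodule.mem_map_of_mem hw)).symm.trans ?_)
  rw [map_mul, map_mul, Module.End.mul_apply, Module.End.mul_apply, inv_self_apply, hg w hw,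
    map_smul]

end Representation

theorem Representation.finrank_mul_card_eq_finrank {K G V ι : Type*} [Field K] [Group G]
    [AddCommGroup V] [Module K V] [FiniteDimensional K V] [Fintype ι] [DecidableEq ι]
    (ρ : Representation K G V) {X : ι → Submodule K V} (hX : DirectSum.IsInternal X)
    (htrans : ∀ i j, ∃ g, (X i).map (ρ g) = X j) (i : ι) :
    finrank K (X i) * Fintype.card ι = finrank K V := by
  have hdim : ∀ j, finrank K (X j) = finrank K (X i) := fun j => by
    obtain ⟨g, hg⟩ := htrans j i
    rw [← hg, ρ.finrank_map]
  simp [hX.finrank_eq_sum, hdim, mul_comm]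

theorem Real.pow_rpow_natCast_div_eq {a : ℝ} (ha : 0 ≤ a) {e s p : ℕ} (hep : e * p ≠ 0) :
    (a ^ e) ^ (((s * p : ℕ) : ℝ) / ((e * p : ℕ) : ℝ)) = a ^ s := by
  have he : (e : ℝ) ≠ 0 := by exact_mod_cast left_ne_zero_of_mul hep
  have hp : (p : ℝ) ≠ 0 := by exact_mod_cast right_ne_zero_of_mul hep
  rw [← Real.rpow_natCast_mul ha, ← Real.rpow_natCast]
  congr 1
  push_cast
  field_simp

theorem stmt18_general {p : ℕ} (G : Type*) [Group G]
    (V : Type*) [AddCommGroup V] [Module ℝ V]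
    (hV : 0 < Module.finrank ℝ V)
    (ρ : Representation ℝ G V)
    (X : Fin p → Submodule ℝ V)
    (hsup : (⨆ i, X i) = ⊤)
    (hdisj : ∀ i : Fin p, Disjoint (X i) (⨆ j ∈ ({i}ᶜ : Set (Fin p)), X j))
    (G₀ : Subgroup G) [G₀.Normal] [Finite (G ⧸ G₀)]
    (hpres : ∀ g ∈ G₀, ∀ i, (X i).map (ρ g) = X i)
    (hperm : ∀ (g : G) (i : Fin p), ∃ j, (X i).map (ρ g) = X j)
    (htrans : ∀ i j : Fin p, ∃ g : G, (X i).map (ρ g) = X j)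
    (γ : G → Fin p → ℝ)
    (hγ : ∀ g ∈ G₀, ∀ i, ∀ v ∈ X i, ρ g v = γ g i • v) :
    (∀ i, Module.finrank ℝ (X i) * p = Module.finrank ℝ V) ∧
    (∀ i j : Fin p,
      Nat.card {q : G ⧸ G₀ // (X i).map (ρ (Quotient.out q)) = X j} * p =
        Nat.card (G ⧸ G₀)) ∧
    (∀ g ∈ G₀, ∀ i : Fin p,
      ∏ᶠ q : G ⧸ G₀, |γ ((Quotient.out q) * g * (Quotient.out q)⁻¹) i| =
        |LinearMap.det (ρ g)| ^
          ((Nat.card (G ⧸ G₀) : ℝ) / (Module.finrank ℝ V : ℝ))) := by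
  have : FiniteDimensional ℝ V := Module.finite_of_finrank_pos hV
  have hX := DirectSum.isInternal_of_iSup_eq_top_of_disjoint hsup hdisj
  have hdim i : finrank ℝ (X i) * p = finrank ℝ V := by
    simpa using ρ.finrank_mul_card_eq_finrank hX htrans i
  have hne i : X i ≠ ⊥ := fun hi => by
    have := hdim i
    rw [hi, finrank_bot, zero_mul] at this
    omega
  let := ρ.submoduleAction
  let y : Fin p → fixedPoints G₀ (Submodule ℝ V) := fun i => ⟨X i, fun m => hpres m m.2 i⟩
  have hy : Function.Injective y := fun i j hij =>
    hX.submodule_iSupIndep.injective hne (congrArg Subtype.val hij)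
  have hcard i j : Nat.card {q : G ⧸ G₀ // (X i).map (ρ q.out) = X j} * p = Nat.card (G ⧸ G₀) :=
    Nat.card_fin p ▸ card_out_smul_mul_card_eq (y := y) hperm htrans hy i j
  refine ⟨hdim, hcard, fun g hg i => ?_⟩
  have hconj (q : G ⧸ G₀) j (hq : (X j).map (ρ q.out) = X i) :
      |γ (q.out * g * q.out⁻¹) i| = |γ g j| :=
    congrArg abs <| ρ.eq_of_apply_eq_smul_of_conj_apply_eq_smul (hne j) (hγ g hg j)
      (hq ▸ hγ _ (Subgroup.Normal.conj_mem ‹_› g hg q.out) i)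
  have hdim_eq j : finrank ℝ (X j) = finrank ℝ (X i) :=
    Nat.eq_of_mul_eq_mul_right i.pos ((hdim j).trans (hdim i).symm)
  rw [finprod_eq_prod_pow_of_out_smul hperm htrans hy i hconj,
    LinearMap.det_eq_prod_pow_finrank_of_isInternal hX (hγ g hg), Finset.abs_prod]
  simp_rw [abs_pow, hdim_eq, Finset.prod_pow]
  rw [← hdim i, ← hcard i i, Real.pow_rpow_natCast_div_eq (by positivity) (hdim i ▸ hV.ne')]
  rfl

/-- let a group `G` act linearly on a finite-dimensional real vector
space `V`, let `V = X₁ ⊕ ⋯ ⊕ X_p` be a direct sum decomposition transitively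
permuted by `G`, with each `Xᵢ` preserved by a normal finite-index subgroup `G₀`.
Then all `Xᵢ` have dimension `d/p`; for each `i, j` the set of cosets
`{[h] ∈ G/G₀ : h·Xᵢ = X_j}` has cardinality `|G/G₀|/p`; and if each `g ∈ G₀` acts
on `Xᵢ` by the scalar `γᵢ(g)` then
`∏_{[h]∈G/G₀} |γᵢ(hgh⁻¹)| = |det g|^{|G/G₀|/d}`. -/
theorem stmt18 {p : ℕ} (hp : 0 < p) (G : Type*) [Group G]
    (V : Type*) [AddCommGroup V] [Module ℝ V] [FiniteDimensional ℝ V]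
    (hV : 0 < Module.finrank ℝ V)
    (ρ : Representation ℝ G V)
    (X : Fin p → Submodule ℝ V)
    (hsup : (⨆ i, X i) = ⊤)
    (hdisj : ∀ i : Fin p, Disjoint (X i) (⨆ j ∈ ({i}ᶜ : Set (Fin p)), X j))
    (G₀ : Subgroup G) [G₀.Normal] [Finite (G ⧸ G₀)]
    (hpres : ∀ g ∈ G₀, ∀ i, (X i).map (ρ g) = X i)
    (hperm : ∀ (g : G) (i : Fin p), ∃ j, (X i).map (ρ g) = X j)
    (htrans : ∀ i j : Fin p, ∃ g : G, (X i).map (ρ g) = X j)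
    (γ : G → Fin p → ℝ)
    (hγ : ∀ g ∈ G₀, ∀ i, ∀ v ∈ X i, ρ g v = γ g i • v) :
    (∀ i, Module.finrank ℝ (X i) * p = Module.finrank ℝ V) ∧
    (∀ i j : Fin p,
      Nat.card {q : G ⧸ G₀ // (X i).map (ρ (Quotient.out q)) = X j} * p =
        Nat.card (G ⧸ G₀)) ∧
    (∀ g ∈ G₀, ∀ i : Fin p,
      ∏ᶠ q : G ⧸ G₀, |γ ((Quotient.out q) * g * (Quotient.out q)⁻¹) i| =
        |LinearMap.det (ρ g)| ^
          ((Nat.card (G ⧸ G₀) : ℝ) / (Module.finrank ℝ V : ℝ))) :=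
  stmt18_general G V hV ρ X hsup hdisj G₀ hpres hperm htrans γ hγ
end
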